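/- arXiv:1902.02473 — 5 statements merged into one kernel-verified Lean document; each statement's English description precedes it below -/
import Mathlib

section
/- Let β be a real number with β ≥ e² + e⁻¹, and let p ∈ H₁. If the function z ↦ p(z)² + β·z·p′(z) is subordinate to z ↦ e^z on 𝔻, then p is subordinate to z ↦ e^z on 𝔻. -/
open Complex

noncomputable section

open Metric Set Topology Filter

set_option maxHeartbeats 1000000

lemma primitive_on_ball {R : ℝ} {g : ℂ → ℂ} (hg : DifferentiableOn ℂ g (ball 0 R)) :
    ∃ G : ℂ → ℂ, G 0 = 0 ∧ ∀ z ∈ ball (0:ℂ) R, HasDerivAt G (g z) z := by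
  have hball : IsOpen (ball (0:ℂ) R) := isOpen_ball
  have han : AnalyticOnNhd ℂ g (ball 0 R) := hg.analyticOnNhd hball
  have hg' : ContinuousOn (deriv g) (ball 0 R) := (han.deriv.differentiableOn).continuousOn
  have hgc : ContinuousOn g (ball 0 R) := hg.continuousOn
  have hcx : ∀ x : ℂ, Continuous fun t : ℝ => (t:ℂ) * x := fun x =>
    Complex.continuous_ofReal.mul continuous_const
  refine ⟨fun z => z * ∫ t in (0:ℝ)..1, g ((t:ℂ) * z), by simp, ?_⟩
  intro z₀ hz₀
  set r : ℝ := (‖z₀‖ + R) / 2 with hr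
  have hz₀R : ‖z₀‖ < R := by simpa [mem_ball, dist_eq_norm] using hz₀
  have hrR : r < R := by simp only [hr]; linarith
  have hz₀r : ‖z₀‖ < r := by simp only [hr]; linarith
  have hr0 : 0 < r := lt_of_le_of_lt (norm_nonneg _) hz₀r
  have hsub : closedBall (0:ℂ) r ⊆ ball 0 R := closedBall_subset_ball hrR
  obtain ⟨C, hC⟩ : ∃ C, ∀ w ∈ closedBall (0:ℂ) r, ‖deriv g w‖ ≤ C :=
    (isCompact_closedBall (0:ℂ) r).exists_bound_of_continuousOn (hg'.mono hsub)
  have hC0 : 0 ≤ C := le_trans (norm_nonneg _) (hC 0 (by simp [hr0.le]))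
  set ε : ℝ := r - ‖z₀‖ with hε
  have hεpos : 0 < ε := by simp only [hε]; linarith
  have hmem0 : ∀ x : ℂ, x ∈ ball z₀ ε → ∀ t : ℝ, t ∈ Set.Icc (0:ℝ) 1 →
      (t:ℂ) * x ∈ closedBall (0:ℂ) r := by
    intro x hx t ht
    have hxd : ‖x - z₀‖ < ε := by simpa [mem_ball, dist_eq_norm] using hx
    have hxr : ‖x‖ < r := by
      have h1 : ‖x‖ ≤ ‖z₀‖ + ‖x - z₀‖ := by simpa using norm_add_le z₀ (x - z₀)
      simp only [hε] at hxd; linarith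
    have ht1 : ‖(t:ℂ)‖ ≤ 1 := by
      rw [Complex.norm_real, Real.norm_eq_abs, _root_.abs_of_nonneg ht.1]; exact ht.2
    simp only [mem_closedBall, dist_zero_right, norm_mul]
    calc ‖(t:ℂ)‖ * ‖x‖ ≤ 1 * r := mul_le_mul ht1 hxr.le (norm_nonneg _) one_pos.le
      _ = r := one_mul r
  have hmem : ∀ x : ℂ, x ∈ ball z₀ ε → ∀ t : ℝ, t ∈ Set.uIoc (0:ℝ) 1 →
      (t:ℂ) * x ∈ closedBall (0:ℂ) r := by
    intro x hx t ht
    rw [Set.uIoc_of_le (by norm_num : (0:ℝ) ≤ 1)] at ht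
    exact hmem0 x hx t ⟨ht.1.le, ht.2⟩
  have hz₀ball : z₀ ∈ ball z₀ ε := mem_ball_self hεpos
  have hcont : ∀ x : ℂ, x ∈ ball z₀ ε →
      ContinuousOn (fun t : ℝ => g ((t:ℂ) * x)) (Set.Icc (0:ℝ) 1) := by
    intro x hx
    exact hgc.comp (hcx x).continuousOn (fun t ht => hsub (hmem0 x hx t ht))
  have hcont' : ∀ x : ℂ, x ∈ ball z₀ ε →
      ContinuousOn (fun t : ℝ => (t:ℂ) * deriv g ((t:ℂ) * x)) (Set.Icc (0:ℝ) 1) := by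
    intro x hx
    exact Complex.continuous_ofReal.continuousOn.mul
      ((hg'.mono hsub).comp (hcx x).continuousOn (fun t ht => hmem0 x hx t ht))
  have huIcc : Set.uIcc (0:ℝ) 1 = Set.Icc 0 1 := Set.uIcc_of_le (by norm_num)
  have key := intervalIntegral.hasDerivAt_integral_of_dominated_loc_of_deriv_le
    (F := fun (x : ℂ) (t : ℝ) => g ((t:ℂ) * x))
    (F' := fun (x : ℂ) (t : ℝ) => (t:ℂ) * deriv g ((t:ℂ) * x))
    (x₀ := z₀) (a := (0:ℝ)) (b := 1) (μ := MeasureTheory.volume)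
    (bound := fun _ : ℝ => C) (ball_mem_nhds z₀ hεpos)
    ?_ ?_ ?_ ?_ ?_ ?_
  · obtain ⟨-, hG⟩ := key
    have hGz : HasDerivAt (fun x : ℂ => x * ∫ t in (0:ℝ)..1, g ((t:ℂ) * x))
        ((∫ t in (0:ℝ)..1, g ((t:ℂ) * z₀)) + z₀ * ∫ t in (0:ℝ)..1, (t:ℂ) * deriv g ((t:ℂ) * z₀)) z₀ := by
      have h := (hasDerivAt_id z₀).mul hG; simp only [one_mul] at h; exact h
    have hid : (∫ t in (0:ℝ)..1, g ((t:ℂ) * z₀)) + z₀ * ∫ t in (0:ℝ)..1, (t:ℂ) * deriv g ((t:ℂ) * z₀) = g z₀ := by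
      have h1 : (∫ t in (0:ℝ)..1, g ((t:ℂ) * z₀)) + z₀ * ∫ t in (0:ℝ)..1, (t:ℂ) * deriv g ((t:ℂ) * z₀)
          = ∫ t in (0:ℝ)..1, (g ((t:ℂ) * z₀) + (t:ℂ) * z₀ * deriv g ((t:ℂ) * z₀)) := by
        rw [← intervalIntegral.integral_const_mul, ← intervalIntegral.integral_add]
        · apply intervalIntegral.integral_congr; intro t _; simp; ring
        · exact (hcont z₀ hz₀ball).intervalIntegrable_of_Icc (by norm_num)
        · exact ((hcont' z₀ hz₀ball).intervalIntegrable_of_Icc (by norm_num)).const_mul z₀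
      rw [h1]
      have h2 : ∀ t ∈ Set.uIcc (0:ℝ) 1, HasDerivAt (fun s : ℝ => (s:ℂ) * g ((s:ℂ) * z₀))
          (g ((t:ℂ) * z₀) + (t:ℂ) * z₀ * deriv g ((t:ℂ) * z₀)) t := by
        intro t ht
        rw [huIcc] at ht
        have htmem : (t:ℂ) * z₀ ∈ ball (0:ℂ) R := hsub (hmem0 z₀ hz₀ball t ht)
        have hgd : HasDerivAt g (deriv g ((t:ℂ) * z₀)) ((t:ℂ) * z₀) :=
          ((hg.differentiableAt (hball.mem_nhds htmem))).hasDerivAt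
        have hinner : HasDerivAt (fun s : ℝ => (s:ℂ) * z₀) z₀ t := by
          simpa using (Complex.ofRealCLM.hasDerivAt (x := t)).mul_const z₀
        have hcomp : HasDerivAt (fun s : ℝ => g ((s:ℂ) * z₀)) (z₀ * deriv g ((t:ℂ) * z₀)) t := by
          simpa [smul_eq_mul, Function.comp_def] using (hgd.scomp t hinner)
        have hsR : HasDerivAt (fun s : ℝ => (s:ℂ)) 1 t := by
          exact Complex.ofRealCLM.hasDerivAt (x := t)
        have := hsR.mul hcomp
        exact this.congr_deriv (by ring)
      have h3 := intervalIntegral.integral_eq_sub_of_hasDerivAt h2 ?_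
      · rw [h3]; simp
      · apply ContinuousOn.intervalIntegrable_of_Icc (by norm_num : (0:ℝ) ≤ 1)
        refine ContinuousOn.add (hcont z₀ hz₀ball) ?_
        exact ((hcont' z₀ hz₀ball).mul (continuousOn_const (c := z₀))).congr (fun t _ => by simp only [Pi.mul_apply]; ring)
    rwa [hid] at hGz
  · filter_upwards [ball_mem_nhds z₀ hεpos] with x hx
    apply ContinuousOn.aestronglyMeasurable ?_ measurableSet_uIoc
    exact (hcont x hx).mono (by rw [← huIcc]; exact Set.uIoc_subset_uIcc)
  · exact (hcont z₀ hz₀ball).intervalIntegrable_of_Icc (by norm_num)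
  · apply ContinuousOn.aestronglyMeasurable ?_ measurableSet_uIoc
    exact (hcont' z₀ hz₀ball).mono (by rw [← huIcc]; exact Set.uIoc_subset_uIcc)
  · refine MeasureTheory.ae_of_all _ ?_
    intro t ht x hx
    have hCt := hC _ (hmem x hx t ht)
    rw [Set.uIoc_of_le (by norm_num : (0:ℝ) ≤ 1)] at ht
    have ht1 : ‖(t:ℂ)‖ ≤ 1 := by
      rw [Complex.norm_real, Real.norm_eq_abs, _root_.abs_of_nonneg ht.1.le]; exact ht.2
    calc ‖(t:ℂ) * deriv g ((t:ℂ) * x)‖ = ‖(t:ℂ)‖ * ‖deriv g ((t:ℂ) * x)‖ := norm_mul _ _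
      _ ≤ 1 * C := mul_le_mul ht1 hCt (norm_nonneg _) one_pos.le
      _ = C := one_mul C
  · exact intervalIntegrable_const
  · refine MeasureTheory.ae_of_all _ ?_
    intro t ht x hx
    have htmem : (t:ℂ) * x ∈ ball (0:ℂ) R := hsub (hmem x hx t ht)
    have hgd : HasDerivAt g (deriv g ((t:ℂ) * x)) ((t:ℂ) * x) :=
      (hg.differentiableAt (hball.mem_nhds htmem)).hasDerivAt
    have hinner : HasDerivAt (fun y : ℂ => (t:ℂ) * y) (t:ℂ) x := by
      simpa using (hasDerivAt_id x).const_mul (t:ℂ)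
    simpa [smul_eq_mul, Function.comp_def] using hgd.scomp x hinner

lemma log_on_ball {R : ℝ} {p : ℂ → ℂ} (hp : DifferentiableOn ℂ p (ball 0 R))
    (hne : ∀ z ∈ ball (0:ℂ) R, p z ≠ 0) (hp0 : p 0 = 1) (hR : 0 < R) :
    ∃ v : ℂ → ℂ, v 0 = 0 ∧ (∀ z ∈ ball (0:ℂ) R, HasDerivAt v (deriv p z / p z) z) ∧
      ∀ z ∈ ball (0:ℂ) R, Complex.exp (v z) = p z := by
  have hball : IsOpen (ball (0:ℂ) R) := isOpen_ball
  have hdp : DifferentiableOn ℂ (deriv p) (ball 0 R) :=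
    ((hp.analyticOnNhd hball).deriv).differentiableOn
  have hg : DifferentiableOn ℂ (fun z => deriv p z / p z) (ball 0 R) :=
    hdp.div hp hne
  obtain ⟨v, hv0, hv⟩ := primitive_on_ball hg
  refine ⟨v, hv0, hv, ?_⟩
  -- h z := p z * exp (-v z) is locally constant
  have hconst : ∀ z ∈ ball (0:ℂ) R, p z * Complex.exp (-v z) = 1 := by
    have hd : DifferentiableOn ℂ (fun z => p z * Complex.exp (-v z)) (ball 0 R) := by
      refine hp.mul ?_
      intro z hz
      exact ((((hv z hz).differentiableAt.neg).cexp)).differentiableWithinAt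
    have hderiv : ∀ z ∈ ball (0:ℂ) R,
        HasDerivAt (fun z => p z * Complex.exp (-v z)) 0 z := by
      intro z hz
      have hpz : HasDerivAt p (deriv p z) z :=
        (hp.differentiableAt (hball.mem_nhds hz)).hasDerivAt
      have hvz : HasDerivAt v (deriv p z / p z) z := hv z hz
      have he : HasDerivAt (fun z => Complex.exp (-v z))
          (Complex.exp (-v z) * -(deriv p z / p z)) z := (hvz.neg).cexp
      have := hpz.mul he
      refine this.congr_deriv ?_
      field_simp [hne z hz]
      ring
    have : ∀ z ∈ ball (0:ℂ) R, p z * Complex.exp (-v z) = p 0 * Complex.exp (-v 0) := by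
      intro z hz
      refine Convex.is_const_of_fderivWithin_eq_zero (convex_ball 0 R) hd ?_ hz
        (mem_ball_self hR)
      intro w hw
      have h1 : fderiv ℂ (fun z => p z * Complex.exp (-v z)) w = 0 := by
        have := (hderiv w hw).hasFDerivAt.fderiv
        rw [this]; exact ContinuousLinearMap.ext fun x => by simp
      rw [fderivWithin_of_isOpen hball hw, h1]
    intro z hz
    rw [this z hz, hp0, hv0]; simp
  intro z hz
  have h := hconst z hz
  have hev : Complex.exp (-v z) ≠ 0 := Complex.exp_ne_zero _
  rw [Complex.exp_neg] at h
  field_simp at h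
  exact h.symm

lemma branch_le {Ω S : Set ℂ} (hΩ : IsOpen Ω) (hS : IsPreconnected S) (hSΩ : S ⊆ Ω)
    {v : ℂ → ℂ} (hv : ContinuousOn v Ω) (h0S : (0:ℂ) ∈ S) (hv0 : v 0 = 0)
    (hT : ∀ z ∈ S, ∃ (u : ℂ) (k : ℤ), ‖u‖ ≤ 1 ∧ v z = u + k * (2 * Real.pi * I)) :
    ∀ z ∈ S, ‖v z‖ ≤ 1 := by
  have hkey : ∀ z ∈ S, ¬ (3 < ‖v z‖) → ‖v z‖ ≤ 1 := by
    intro z hz h3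
    obtain ⟨u, k, hu, hvz⟩ := hT z hz
    rcases eq_or_ne k 0 with rfl | hk
    · simpa [hvz] using hu
    · exfalso
      apply h3
      have hnk : (1:ℝ) ≤ |(k:ℝ)| := by
        rw [← Int.cast_abs]
        exact_mod_cast Int.one_le_abs hk
      have : ‖(k:ℂ) * (2 * Real.pi * I)‖ = |(k:ℝ)| * (2 * Real.pi) := by
        simp only [norm_mul, Complex.norm_intCast, Complex.norm_I, mul_one,
          Complex.norm_ofNat, Complex.norm_real, Real.norm_eq_abs, Int.cast_abs]
        rw [abs_of_pos Real.pi_pos]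
      have hπ : (3:ℝ) < Real.pi := Real.pi_gt_three
      have h1 : ‖v z‖ ≥ ‖(k:ℂ) * (2 * Real.pi * I)‖ - ‖u‖ := by
        rw [hvz]
        have := norm_add_le (-u) (u + k * (2 * Real.pi * I))
        simp only [neg_add_cancel_left, norm_neg] at this
        calc ‖(k:ℂ) * (2 * Real.pi * I)‖ - ‖u‖ ≤ ‖u + k * (2 * Real.pi * I)‖ := by linarith
          _ = ‖u + k * (2 * Real.pi * I)‖ := rfl
      rw [this] at h1
      nlinarith
  by_contra hcon
  push_neg at hcon
  obtain ⟨z₁, hz₁S, hz₁⟩ := hcon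
  -- use preconnectedness with U = {‖v‖ < 3}, V = {‖v‖ > 3}
  set U : Set ℂ := Ω ∩ v ⁻¹' (ball 0 3) with hU
  set V : Set ℂ := Ω ∩ v ⁻¹' {w : ℂ | 3 < ‖w‖} with hV
  have hUopen : IsOpen U := hv.isOpen_inter_preimage hΩ isOpen_ball
  have hVopen : IsOpen V := by
    refine hv.isOpen_inter_preimage hΩ ?_
    have : {w : ℂ | 3 < ‖w‖} = (fun w : ℂ => ‖w‖) ⁻¹' (Ioi 3) := rfl
    rw [this]; exact isOpen_Ioi.preimage continuous_norm
  have hcover : S ⊆ U ∪ V := by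
    intro z hz
    rcases lt_or_ge 3 ‖v z‖ with h | h
    · exact Or.inr ⟨hSΩ hz, h⟩
    · refine Or.inl ⟨hSΩ hz, ?_⟩
      have := hkey z hz (not_lt.mpr h)
      simp only [mem_preimage, mem_ball, dist_zero_right]
      linarith
  have hUne : (S ∩ U).Nonempty := ⟨0, h0S, hSΩ h0S, by simp [hv0]⟩
  have hVne : (S ∩ V).Nonempty := by
    refine ⟨z₁, hz₁S, hSΩ hz₁S, ?_⟩
    simp only [mem_preimage, mem_setOf_eq]
    by_contra h3
    push_neg at h3
    exact absurd (hkey z₁ hz₁S (not_lt.mpr h3)) (not_le.mpr hz₁)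
  obtain ⟨z₂, hz₂S, hz₂U, hz₂V⟩ := hS U V hUopen hVopen hcover hUne hVne
  have h1 : ‖v z₂‖ < 3 := by simpa [mem_ball, dist_zero_right] using hz₂U.2
  have h2 : 3 < ‖v z₂‖ := hz₂V.2
  linarith

lemma real_ineq {β t : ℝ} (hβ : Real.exp 1 ^ 2 + (Real.exp 1)⁻¹ ≤ β)
    (h1 : Real.exp (-1) ≤ t) (h2 : t ≤ Real.exp 1) : Real.exp 1 ≤ β * t - t ^ 2 := by
  have hE : 0 < Real.exp 1 := Real.exp_pos 1
  have hE1 : 1 < Real.exp 1 := by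
    have := Real.add_one_lt_exp (x := 1) (by norm_num); linarith
  have hinv : Real.exp (-1) = (Real.exp 1)⁻¹ := by
    rw [Real.exp_neg]
  rw [hinv] at h1
  have hiE : (Real.exp 1)⁻¹ * Real.exp 1 = 1 := inv_mul_cancel₀ hE.ne'
  have ht0 : 0 < t := lt_of_lt_of_le (by positivity) h1
  have hE2 : (Real.exp 1)⁻¹ * Real.exp 1 ^ 2 = Real.exp 1 := by
    rw [pow_two, ← mul_assoc, hiE, one_mul]
  have htE2 : t ≤ Real.exp 1 ^ 2 := h2.trans (by nlinarith)
  have key : 0 ≤ (t - (Real.exp 1)⁻¹) * (Real.exp 1 ^ 2 - t) :=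
    mul_nonneg (by linarith) (by linarith)
  have hmul : (Real.exp 1 ^ 2 + (Real.exp 1)⁻¹) * t ≤ β * t :=
    mul_le_mul_of_nonneg_right hβ ht0.le
  nlinarith [key, hE2, hmul]

lemma eq_of_small_diff {a b : ℂ} {n : ℤ} (h : a = b + n * (2 * Real.pi * I))
    (ha : ‖a‖ ≤ 1) (hb : ‖b‖ ≤ 1) : a = b := by
  rcases eq_or_ne n 0 with rfl | hn
  · simpa using h
  · exfalso
    have hπ : (3:ℝ) < Real.pi := Real.pi_gt_three
    have hnk : (1:ℝ) ≤ |(n:ℝ)| := by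
      rw [← Int.cast_abs]; exact_mod_cast Int.one_le_abs hn
    have hnorm : ‖(n:ℂ) * (2 * Real.pi * I)‖ = |(n:ℝ)| * (2 * Real.pi) := by
      simp only [norm_mul, Complex.norm_intCast, Complex.norm_I, mul_one,
        Complex.norm_ofNat, Complex.norm_real, Real.norm_eq_abs, Int.cast_abs]
      rw [abs_of_pos Real.pi_pos]
    have h2 : ‖a - b‖ ≤ 2 := by
      calc ‖a - b‖ ≤ ‖a‖ + ‖b‖ := norm_sub_le a b
        _ ≤ 2 := by linarith
    have h3 : a - b = n * (2 * Real.pi * I) := by rw [h]; ring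
    rw [h3, hnorm] at h2
    nlinarith

lemma compact_ball_subset {r0 : ℝ} (h0 : 0 ≤ r0) {O : Set ℂ} (hO : IsOpen O)
    (hsub : closedBall 0 r0 ⊆ O) : ∃ r1 : ℝ, r0 < r1 ∧ closedBall 0 r1 ⊆ O := by
  obtain ⟨δ, hδ, hth⟩ := (isCompact_closedBall (0:ℂ) r0).exists_thickening_subset_open hO hsub
  refine ⟨r0 + δ/2, by linarith, ?_⟩
  intro z hz
  apply hth
  rw [Metric.mem_thickening_iff]
  simp only [mem_closedBall, dist_zero_right] at hz
  rcases le_or_gt ‖z‖ r0 with h | h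
  · exact ⟨z, by simpa [mem_closedBall, dist_zero_right], by simpa using hδ⟩
  · have hz0 : 0 < ‖z‖ := lt_of_le_of_lt h0 h
    refine ⟨((r0 / ‖z‖ : ℝ) : ℂ) * z, ?_, ?_⟩
    · simp only [mem_closedBall, dist_zero_right, norm_mul, Complex.norm_real,
        Real.norm_eq_abs]
      rw [_root_.abs_of_nonneg (by positivity), div_mul_cancel₀ _ hz0.ne']
    · have hdist : dist z (((r0 / ‖z‖ : ℝ) : ℂ) * z) = ‖z‖ - r0 := by
        rw [dist_eq_norm]
        have e : z - ((r0 / ‖z‖ : ℝ) : ℂ) * z = (((1 - r0 / ‖z‖ : ℝ)) : ℂ) * z := by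
          push_cast; ring
        rw [e, norm_mul, Complex.norm_real, Real.norm_eq_abs,
          _root_.abs_of_nonneg (by rw [sub_nonneg]; exact (div_le_one hz0).mpr h.le)]
        have : r0 / ‖z‖ * ‖z‖ = r0 := div_mul_cancel₀ _ hz0.ne'
        nlinarith [this]
      rw [hdist]; linarith

lemma jack {r0 r1 : ℝ} {v : ℂ → ℂ} (h0 : 0 < r0) (h01 : r0 < r1)
    (hv : DifferentiableOn ℂ v (ball 0 r1)) (hv0 : v 0 = 0)
    (hb : ∀ z : ℂ, ‖z‖ ≤ r0 → ‖v z‖ ≤ 1)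
    {z0 : ℂ} (hz0 : ‖z0‖ = r0) (h1 : ‖v z0‖ = 1) :
    ∃ m : ℝ, 1 ≤ m ∧ z0 * deriv v z0 = (m : ℂ) * v z0 := by
  have hball1 : IsOpen (ball (0:ℂ) r1) := isOpen_ball
  have hz0mem : z0 ∈ ball (0:ℂ) r1 := by
    simp [mem_ball, dist_zero_right, hz0, h01]
  have hvd : HasDerivAt v (deriv v z0) z0 :=
    (hv.differentiableAt (hball1.mem_nhds hz0mem)).hasDerivAt
  -- (a) Schwarz estimate
  have hs : ∀ z : ℂ, ‖z‖ < r0 → ‖v z‖ ≤ ‖z‖ / r0 := by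
    intro z hz
    rcases eq_or_ne z 0 with rfl | hz0'
    · simp [hv0]
    have hznorm : 0 < ‖z‖ := norm_pos_iff.mpr hz0'
    have key : ∀ ε : ℝ, 0 < ε → ‖v z‖ ≤ (1 + ε) / r0 * ‖z‖ := by
      intro ε hε
      have hmaps : MapsTo v (ball 0 r0) (ball (v 0) (1 + ε)) := by
        intro w hw
        have hw' : ‖w‖ ≤ r0 := le_of_lt (by simpa [mem_ball, dist_zero_right] using hw)
        have := hb w hw'
        simp only [hv0, mem_ball, dist_zero_right]
        linarith
      have hdiff : DifferentiableOn ℂ v (ball 0 r0) :=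
        hv.mono (ball_subset_ball h01.le)
      have := Complex.dist_le_div_mul_dist_of_mapsTo_ball hdiff (hmaps.mono_right ball_subset_closedBall)
        (by simpa [mem_ball, dist_zero_right] using hz)
      simpa [hv0, dist_zero_right] using this
    by_contra hcon
    push_neg at hcon
    obtain ⟨a, ha⟩ : ∃ a : ℝ, a = ‖z‖ := ⟨‖z‖, rfl⟩
    rw [← ha] at hcon hznorm
    set δ : ℝ := (‖v z‖ - a / r0) with hδ
    have hδpos : 0 < δ := by simp only [hδ]; linarith
    have hε : 0 < δ * r0 / (2 * a) := by positivity
    have hk := key _ hε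
    rw [← ha] at hk
    have hexp : (1 + δ * r0 / (2 * a)) / r0 * a = a / r0 + δ / 2 := by
      field_simp
    rw [hexp] at hk
    simp only [hδ] at hk
    linarith
  -- notation
  set m' : ℂ := (starRingEnd ℂ) (v z0) * (z0 * deriv v z0) with hm'
  -- (c1) real part at least 1
  have hφ : HasDerivAt (fun r : ℝ => v ((r:ℂ) * z0)) (z0 * deriv v z0) 1 := by
    have hinner : HasDerivAt (fun r : ℝ => (r:ℂ) * z0) z0 1 := by
      simpa using (Complex.ofRealCLM.hasDerivAt (x := (1:ℝ))).mul_const z0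
    have hvd' : HasDerivAt v (deriv v z0) (((1:ℝ):ℂ) * z0) := by
      rw [Complex.ofReal_one, one_mul]; exact hvd
    simpa [smul_eq_mul, Function.comp_def] using hvd'.scomp 1 hinner
  have hre : 1 ≤ m'.re := by
    rw [hasDerivAt_iff_tendsto_slope] at hφ
    have hmono : 𝓝[<] (1:ℝ) ≤ 𝓝[≠] (1:ℝ) :=
      nhdsWithin_mono 1 (fun r hr => ne_of_lt hr)
    have hφ' := hφ.mono_left hmono
    have hT : Filter.Tendsto
        (fun r : ℝ => ((starRingEnd ℂ) (v z0) * slope (fun r : ℝ => v ((r:ℂ) * z0)) 1 r).re)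
        (𝓝[<] (1:ℝ)) (𝓝 m'.re) := by
      exact (Complex.continuous_re.comp (continuous_const.mul continuous_id)).continuousAt.tendsto.comp hφ'
    refine ge_of_tendsto hT ?_
    filter_upwards [Ioo_mem_nhdsLT one_pos] with r hr
    obtain ⟨hr0, hr1⟩ := hr
    have hslope : slope (fun r : ℝ => v ((r:ℂ) * z0)) 1 r
        = (r - 1)⁻¹ • (v ((r:ℂ) * z0) - v z0) := by
      rw [slope_def_module]
      congr 2
      rw [Complex.ofReal_one, one_mul]
    rw [hslope]
    have hnorm_r : ‖((r:ℂ) * z0)‖ = r * r0 := by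
      rw [norm_mul, Complex.norm_real, Real.norm_eq_abs, _root_.abs_of_nonneg hr0.le, hz0]
    have hvr : ‖v ((r:ℂ) * z0)‖ ≤ r := by
      have hlt : ‖((r:ℂ) * z0)‖ < r0 := by
        rw [hnorm_r]
        nlinarith
      have := hs _ hlt
      rw [hnorm_r] at this
      calc ‖v ((r:ℂ) * z0)‖ ≤ r * r0 / r0 := this
        _ = r := by field_simp
    -- compute real part
    have hsmul : ((starRingEnd ℂ) (v z0) * ((r - 1 : ℝ)⁻¹ • (v ((r:ℂ) * z0) - v z0))).re
        = (r - 1)⁻¹ * ((starRingEnd ℂ) (v z0) * (v ((r:ℂ) * z0) - v z0)).re := by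
      rw [mul_smul_comm, Complex.real_smul, Complex.mul_re]
      simp
      left
      rw [← Complex.ofReal_one, ← Complex.ofReal_sub, Complex.normSq_ofReal]
      have hne : r - 1 ≠ 0 := by linarith
      field_simp
    rw [hsmul]
    have hA : ((starRingEnd ℂ) (v z0) * (v ((r:ℂ) * z0) - v z0)).re ≤ r - 1 := by
      have e1 : ((starRingEnd ℂ) (v z0) * (v ((r:ℂ) * z0) - v z0))
          = (starRingEnd ℂ) (v z0) * v ((r:ℂ) * z0) - (starRingEnd ℂ) (v z0) * v z0 := by ring
      rw [e1]
      have e2 : ((starRingEnd ℂ) (v z0) * v z0) = ((1:ℝ) : ℂ) := by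
        rw [mul_comm, Complex.mul_conj, Complex.normSq_eq_norm_sq]
        norm_cast
        rw [h1]
        norm_num
      rw [Complex.sub_re, e2]
      have e3 : ((starRingEnd ℂ) (v z0) * v ((r:ℂ) * z0)).re ≤ r := by
        calc ((starRingEnd ℂ) (v z0) * v ((r:ℂ) * z0)).re
            ≤ ‖(starRingEnd ℂ) (v z0) * v ((r:ℂ) * z0)‖ := Complex.re_le_norm _
          _ = ‖v z0‖ * ‖v ((r:ℂ) * z0)‖ := by rw [norm_mul, RCLike.norm_conj]
          _ ≤ 1 * r := by
              rw [h1]; simpa using hvr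
          _ = r := one_mul r
      simp only [Complex.ofReal_one]
      norm_num
      rw [Complex.mul_re, Complex.conj_re, Complex.conj_im] at e3
      linarith
    have hneg : (r - 1 : ℝ)⁻¹ ≤ 0 := by
      apply inv_nonpos.mpr; linarith
    have := mul_le_mul_of_nonpos_left hA hneg
    calc (1:ℝ) = (r-1)⁻¹ * (r-1) := (inv_mul_cancel₀ (by linarith)).symm
      _ ≤ (r-1)⁻¹ * ((starRingEnd ℂ) (v z0) * (v ((r:ℂ) * z0) - v z0)).re := this
  -- (c2) imaginary part zero
  have him : m'.im = 0 := by
    set γ : ℝ → ℂ := fun t => Complex.exp ((t:ℂ) * I) * z0 with hγ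
    have hγ0 : γ 0 = z0 := by simp [hγ]
    have hγd : HasDerivAt γ (I * z0) 0 := by
      have hinner : HasDerivAt (fun t : ℝ => (t:ℂ) * I) I 0 := by
        simpa using (Complex.ofRealCLM.hasDerivAt (x := (0:ℝ))).mul_const I
      have hexp : HasDerivAt (fun t : ℝ => Complex.exp ((t:ℂ) * I)) I 0 := by
        have houter : HasDerivAt Complex.exp (Complex.exp (((0:ℝ):ℂ) * I)) (((0:ℝ):ℂ) * I) :=
          Complex.hasDerivAt_exp _
        have := houter.scomp 0 hinner
        simpa [smul_eq_mul, Function.comp_def] using this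
      simpa using hexp.mul_const z0
    have hγnorm : ∀ t : ℝ, ‖γ t‖ = r0 := by
      intro t
      simp only [hγ, norm_mul, hz0]
      rw [Complex.norm_exp]
      simp
    have hF : HasDerivAt (fun t : ℝ => v (γ t)) ((I * z0) * deriv v z0) 0 := by
      have hvd' : HasDerivAt v (deriv v z0) (γ 0) := by rw [hγ0]; exact hvd
      simpa [smul_eq_mul, Function.comp_def] using hvd'.scomp 0 hγd
    -- real and imaginary parts
    set F' : ℂ := (I * z0) * deriv v z0 with hF'
    have hRe : HasDerivAt (fun t : ℝ => (v (γ t)).re) F'.re 0 := by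
      have := (Complex.reCLM.hasFDerivAt.comp (0:ℝ) hF.hasFDerivAt).hasDerivAt
      simp at this; exact this
    have hIm : HasDerivAt (fun t : ℝ => (v (γ t)).im) F'.im 0 := by
      have := (Complex.imCLM.hasFDerivAt.comp (0:ℝ) hF.hasFDerivAt).hasDerivAt
      simp at this; exact this
    have hg : HasDerivAt (fun t : ℝ => (v (γ t)).re ^ 2 + (v (γ t)).im ^ 2)
        (2 * (v (γ 0)).re ^ 1 * F'.re + 2 * (v (γ 0)).im ^ 1 * F'.im) 0 := by
      exact ((hRe.pow 2).add (hIm.pow 2)).congr_deriv (by ring)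
    have hmax : IsLocalMax (fun t : ℝ => (v (γ t)).re ^ 2 + (v (γ t)).im ^ 2) 0 := by
      apply Filter.Eventually.of_forall
      intro t
      have h1t : ‖v (γ t)‖ ≤ 1 := hb _ (le_of_eq (hγnorm t))
      have e0 : (v (γ 0)).re ^ 2 + (v (γ 0)).im ^ 2 = 1 := by
        have : Complex.normSq (v (γ 0)) = 1 := by
          rw [Complex.normSq_eq_norm_sq, hγ0, h1]; norm_num
        simpa [Complex.normSq_apply, sq] using this
      have et : (v (γ t)).re ^ 2 + (v (γ t)).im ^ 2 = ‖v (γ t)‖ ^ 2 := by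
        rw [Complex.sq_norm, Complex.normSq_apply]
        ring
      have hle : ‖v (γ t)‖ ^ 2 ≤ 1 := by nlinarith [norm_nonneg (v (γ t))]
      simp only []
      rw [e0, et]
      exact hle
    have hd0 : deriv (fun t : ℝ => (v (γ t)).re ^ 2 + (v (γ t)).im ^ 2) 0 = 0 :=
      hmax.deriv_eq_zero
    rw [hg.deriv] at hd0
    -- translate to m'.im = 0
    have htrans : 2 * (v (γ 0)).re ^ 1 * F'.re + 2 * (v (γ 0)).im ^ 1 * F'.im
        = 2 * ((starRingEnd ℂ) (v z0) * F').re := by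
      rw [hγ0]
      simp [Complex.mul_re, Complex.conj_re, Complex.conj_im]
      ring
    rw [htrans] at hd0
    have hiden : (starRingEnd ℂ) (v z0) * F' = I * m' := by
      simp only [hF', hm']
      ring
    rw [hiden] at hd0
    simp only [Complex.mul_re, Complex.I_re, Complex.I_im] at hd0
    linarith
  refine ⟨m'.re, hre, ?_⟩
  have hm'eq : m' = ((m'.re : ℝ) : ℂ) := by
    apply Complex.ext
    · simp
    · simp [him]
  have hconj : v z0 * (starRingEnd ℂ) (v z0) = 1 := by
    rw [Complex.mul_conj, Complex.normSq_eq_norm_sq]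
    norm_cast
    rw [h1]
    norm_num
  calc z0 * deriv v z0 = (v z0 * (starRingEnd ℂ) (v z0)) * (z0 * deriv v z0) := by
        rw [hconj, one_mul]
    _ = v z0 * m' := by rw [hm']; ring
    _ = (m'.re : ℂ) * v z0 := by rw [← hm'eq]; ring

/-- The open unit disk in the complex plane. -/
def unitDisk : Set ℂ := Metric.ball 0 1

/-- `f` is subordinate to `g` on the open unit disk: there is an analytic
Schwarz function `w` with `w 0 = 0`, `‖w z‖ < 1` on the disk, and `f = g ∘ w`. -/
def Subord (f g : ℂ → ℂ) : Prop :=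
  ∃ w : ℂ → ℂ, DifferentiableOn ℂ w unitDisk ∧ w 0 = 0 ∧
    (∀ z ∈ unitDisk, ‖w z‖ < 1) ∧ ∀ z ∈ unitDisk, f z = g (w z)

theorem stmt_13 (β : ℝ) (hβ : Real.exp 1 ^ 2 + (Real.exp 1)⁻¹ ≤ β)
    (p : ℂ → ℂ) (hp : DifferentiableOn ℂ p unitDisk) (hp0 : p 0 = 1)
    (hsub : Subord (fun z => (p z) ^ 2 + (β : ℂ) * z * deriv p z) Complex.exp) :
    Subord p Complex.exp := by
  obtain ⟨ω, hωd, hω0, hωlt, hωeq⟩ := hsub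
  have hUopen : IsOpen unitDisk := isOpen_ball
  have hE : ∀ z ∈ unitDisk, ‖p z ^ 2 + (β:ℂ) * z * deriv p z‖ < Real.exp 1 := by
    intro z hz
    have h := hωeq z hz
    simp only at h
    rw [h, Complex.norm_exp]
    apply Real.exp_lt_exp.mpr
    calc (ω z).re ≤ |(ω z).re| := le_abs_self _
      _ ≤ ‖ω z‖ := Complex.abs_re_le_norm _
      _ < 1 := by exact hωlt z hz
  have hmain : ∀ z ∈ unitDisk, p z ∈ Complex.exp '' (ball 0 1) := by
    by_contra hcon
    push_neg at hcon
    obtain ⟨z₁, hz₁U, hpz₁⟩ := hcon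
    have hz₁n : ‖z₁‖ < 1 := by simpa [unitDisk, mem_ball, dist_zero_right] using hz₁U
    set S : Set ℝ := {r : ℝ | 0 ≤ r ∧ ∀ z : ℂ, ‖z‖ ≤ r → p z ∈ Complex.exp '' (ball 0 1)}
      with hSdef
    have h0S : (0:ℝ) ∈ S := by
      refine ⟨le_refl 0, ?_⟩
      intro z hz
      have hz0 : z = 0 := by rwa [norm_le_zero_iff] at hz
      rw [hz0, hp0]
      exact ⟨0, by simp, by simp⟩
    have hSlt : ∀ r ∈ S, r < ‖z₁‖ := by
      intro r hr
      by_contra hge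
      push_neg at hge
      exact hpz₁ (hr.2 z₁ hge)
    have hbdd : BddAbove S := ⟨‖z₁‖, fun r hr => (hSlt r hr).le⟩
    have hSne : S.Nonempty := ⟨0, h0S⟩
    set r0 : ℝ := sSup S with hr0def
    have hr0nn : 0 ≤ r0 := le_csSup hbdd h0S
    have hr0lt : r0 < 1 := lt_of_le_of_lt (csSup_le hSne (fun r hr => (hSlt r hr).le)) hz₁n
    have hin : ∀ z : ℂ, ‖z‖ < r0 → p z ∈ Complex.exp '' (ball 0 1) := by
      intro z hz
      obtain ⟨r, hrS, hrz⟩ := exists_lt_of_lt_csSup hSne hz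
      exact hrS.2 z hrz.le
    have hUDmem : ∀ z : ℂ, ‖z‖ ≤ r0 → z ∈ unitDisk := by
      intro z hz; simp only [unitDisk, mem_ball, dist_zero_right]; linarith
    have hcb : ∀ z : ℂ, ‖z‖ ≤ r0 → p z ∈ Complex.exp '' (closedBall 0 1) := by
      intro z hz
      rcases lt_or_eq_of_le hz with h | h
      · exact (Set.image_mono ball_subset_closedBall) (hin z h)
      · have hzU : z ∈ unitDisk := hUDmem z hz
        rcases eq_or_lt_of_le hr0nn with h0 | h0
        · have hz0 : z = 0 := by rw [← norm_le_zero_iff, h, ← h0]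
          rw [hz0, hp0]
          exact ⟨0, by simp, by simp⟩
        · have hcont : ContinuousAt p z := (hp.differentiableAt (hUopen.mem_nhds hzU)).continuousAt
          have htend : Tendsto (fun t : ℝ => p ((t:ℂ) * z)) (𝓝[<] (1:ℝ)) (𝓝 (p z)) := by
            have hlin : Tendsto (fun t : ℝ => (t:ℂ) * z) (𝓝 (1:ℝ)) (𝓝 z) := by
              have hc : Continuous (fun t : ℝ => (t:ℂ) * z) :=
                Complex.continuous_ofReal.mul continuous_const
              simpa using hc.tendsto 1
            exact hcont.tendsto.comp (hlin.mono_left nhdsWithin_le_nhds)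
          have hev : ∀ᶠ t : ℝ in nhdsWithin (1:ℝ) (Set.Iio 1), p ((t:ℂ) * z) ∈ Complex.exp '' (closedBall (0:ℂ) 1) := by
            filter_upwards [Ioo_mem_nhdsLT (by norm_num : (0:ℝ) < 1)] with t ht
            have hlt : ‖(t:ℂ) * z‖ < r0 := by
              rw [norm_mul, Complex.norm_real, Real.norm_eq_abs, _root_.abs_of_nonneg ht.1.le, h]
              nlinarith [ht.1, ht.2, h0]
            exact (Set.image_mono ball_subset_closedBall) (hin _ hlt)
          have hclosed : IsClosed (Complex.exp '' (closedBall (0:ℂ) 1)) :=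
            ((isCompact_closedBall (0:ℂ) 1).image Complex.continuous_exp).isClosed
          exact hclosed.mem_of_tendsto htend hev
    have hz0ex : ∃ z0 : ℂ, ‖z0‖ = r0 ∧ p z0 ∉ Complex.exp '' (ball 0 1) := by
      by_contra hall
      push_neg at hall
      set O : Set ℂ := unitDisk ∩ p ⁻¹' (Complex.exp '' (ball 0 1)) with hOdef
      have hOopen : IsOpen O :=
        hp.continuousOn.isOpen_inter_preimage hUopen (Complex.isOpenMap_exp _ isOpen_ball)
      have hsubO : closedBall 0 r0 ⊆ O := by
        intro z hz
        simp only [mem_closedBall, dist_zero_right] at hz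
        refine ⟨hUDmem z hz, ?_⟩
        rcases lt_or_eq_of_le hz with h | h
        · exact hin z h
        · exact hall z h
      obtain ⟨r1, hr01, hr1sub⟩ := compact_ball_subset hr0nn hOopen hsubO
      have hr1S : min r1 ((r0+1)/2) ∈ S := by
        refine ⟨le_min (by linarith) (by linarith), ?_⟩
        intro z hz
        have hzr1 : z ∈ closedBall (0:ℂ) r1 := by
          simp only [mem_closedBall, dist_zero_right]
          exact hz.trans (min_le_left _ _)
        exact (hr1sub hzr1).2
      have hle := le_csSup hbdd hr1S
      have hlt : r0 < min r1 ((r0+1)/2) := lt_min hr01 (by linarith)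
      linarith
    obtain ⟨z0, hz0n, hpz0⟩ := hz0ex
    have hr0pos : 0 < r0 := by
      rcases eq_or_lt_of_le hr0nn with h0 | h0
      · exfalso
        have hz00 : z0 = 0 := by rw [← norm_le_zero_iff, hz0n, ← h0]
        apply hpz0
        rw [hz00, hp0]
        exact ⟨0, by simp, by simp⟩
      · exact h0
    obtain ⟨ζ0, hζmem, hζeq⟩ := hcb z0 hz0n.le
    have hζn : ‖ζ0‖ = 1 := by
      have hle : ‖ζ0‖ ≤ 1 := by simpa [mem_closedBall, dist_zero_right] using hζmem
      rcases lt_or_eq_of_le hle with h | h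
      · exact absurd ⟨ζ0, by simpa [mem_ball, dist_zero_right] using h, hζeq⟩ hpz0
      · exact h
    set O2 : Set ℂ := unitDisk ∩ p ⁻¹' ({0}ᶜ) with hO2def
    have hO2open : IsOpen O2 :=
      hp.continuousOn.isOpen_inter_preimage hUopen isOpen_compl_singleton
    have hsubO2 : closedBall 0 r0 ⊆ O2 := by
      intro z hz
      simp only [mem_closedBall, dist_zero_right] at hz
      refine ⟨hUDmem z hz, ?_⟩
      obtain ⟨u, hu, hue⟩ := hcb z hz
      simp only [mem_preimage, mem_compl_iff, mem_singleton_iff]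
      rw [← hue]
      exact Complex.exp_ne_zero u
    obtain ⟨r1, hr01, hr1sub⟩ := compact_ball_subset hr0nn hO2open hsubO2
    have hballsub : ball (0:ℂ) r1 ⊆ O2 := fun z hz => hr1sub (ball_subset_closedBall hz)
    have hpd1 : DifferentiableOn ℂ p (ball 0 r1) := hp.mono (fun z hz => (hballsub hz).1)
    have hpne1 : ∀ z ∈ ball (0:ℂ) r1, p z ≠ 0 := fun z hz => by
      have := (hballsub hz).2; simpa using this
    have hr1pos : 0 < r1 := lt_trans hr0pos hr01
    obtain ⟨v, hv0, hvd, hvexp⟩ := log_on_ball hpd1 hpne1 hp0 hr1pos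
    have hvcont : ContinuousOn v (ball 0 r1) := fun z hz =>
      ((hvd z hz).differentiableAt.continuousAt).continuousWithinAt
    have hcbsub : closedBall (0:ℂ) r0 ⊆ ball 0 r1 := closedBall_subset_ball hr01
    have hbranch : ∀ z : ℂ, ‖z‖ ≤ r0 → ‖v z‖ ≤ 1 := by
      have hb := branch_le isOpen_ball (convex_closedBall (0:ℂ) r0).isPreconnected hcbsub
        hvcont (by simp [mem_closedBall, hr0nn]) hv0 ?_
      · intro z hz
        exact hb z (by simpa [mem_closedBall, dist_zero_right] using hz)
      · intro z hz
        have hz' : ‖z‖ ≤ r0 := by simpa [mem_closedBall, dist_zero_right] using hz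
        obtain ⟨u, hu, hue⟩ := hcb z hz'
        have hee : Complex.exp (v z) = Complex.exp u := by
          rw [hvexp z (hcbsub hz), ← hue]
        obtain ⟨n, hn⟩ := Complex.exp_eq_exp_iff_exists_int.mp hee
        exact ⟨u, n, by simpa [mem_closedBall, dist_zero_right] using hu, hn⟩
    have hz0ball : z0 ∈ ball (0:ℂ) r1 := by
      simp [mem_ball, dist_zero_right, hz0n, hr01]
    have hvz0 : v z0 = ζ0 := by
      have he : Complex.exp (v z0) = Complex.exp ζ0 := by rw [hvexp z0 hz0ball, ← hζeq]
      obtain ⟨n, hn⟩ := Complex.exp_eq_exp_iff_exists_int.mp he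
      exact eq_of_small_diff hn (hbranch z0 hz0n.le) (le_of_eq hζn)
    have hvz0n : ‖v z0‖ = 1 := by rw [hvz0, hζn]
    obtain ⟨m, hm1, hmeq⟩ := jack hr0pos hr01
      (fun z hz => (hvd z hz).differentiableAt.differentiableWithinAt) hv0 hbranch hz0n hvz0n
    have hdp : HasDerivAt p (Complex.exp (v z0) * deriv v z0) z0 := by
      have hd : HasDerivAt v (deriv v z0) z0 := (hvd z0 hz0ball).differentiableAt.hasDerivAt
      have h1 : HasDerivAt (fun z => Complex.exp (v z))
          (Complex.exp (v z0) * deriv v z0) z0 := hd.cexp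
      apply h1.congr_of_eventuallyEq
      filter_upwards [isOpen_ball.mem_nhds hz0ball] with z hz
      exact (hvexp z hz).symm
    have hdpz : deriv p z0 = Complex.exp ζ0 * deriv v z0 := by rw [hdp.deriv, hvz0]
    have hzdv : z0 * deriv v z0 = (m:ℂ) * ζ0 := by rw [hmeq, hvz0]
    set t : ℝ := Real.exp (ζ0.re) with htdef
    have habsre : |ζ0.re| ≤ 1 := by
      have := Complex.abs_re_le_norm ζ0
      rwa [hζn] at this
    have htlb : Real.exp (-1) ≤ t := Real.exp_le_exp.mpr (by
      have := neg_abs_le ζ0.re; linarith)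
    have htub : t ≤ Real.exp 1 := Real.exp_le_exp.mpr (by
      have := le_abs_self ζ0.re; linarith)
    have hnormexp : ‖Complex.exp ζ0‖ = t := by rw [Complex.norm_exp]
    have hβ0 : (0:ℝ) < β := lt_of_lt_of_le (by positivity) hβ
    have hm0 : (0:ℝ) < m := lt_of_lt_of_le one_pos hm1
    have hz0U : z0 ∈ unitDisk := hUDmem z0 hz0n.le
    have hEz0 := hE z0 hz0U
    have hterm : (β:ℂ) * z0 * deriv p z0 = (β:ℂ) * (m:ℂ) * ζ0 * Complex.exp ζ0 := by
      rw [hdpz]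
      have e : (β:ℂ) * z0 * (Complex.exp ζ0 * deriv v z0)
          = (β:ℂ) * Complex.exp ζ0 * (z0 * deriv v z0) := by ring
      rw [e, hzdv]; ring
    have hnt : ‖(β:ℂ) * z0 * deriv p z0‖ = β * m * t := by
      rw [hterm]
      rw [norm_mul, norm_mul, norm_mul, hnormexp, hζn]
      simp only [Complex.norm_real, Real.norm_eq_abs]
      rw [_root_.abs_of_pos hβ0, _root_.abs_of_pos hm0]
      ring
    have hsq : ‖p z0 ^ 2‖ = t ^ 2 := by
      rw [← hζeq, norm_pow, hnormexp]
    have hlower : β * m * t - t ^ 2 ≤ ‖p z0 ^ 2 + (β:ℂ) * z0 * deriv p z0‖ := by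
      have h2 := norm_sub_le (p z0 ^ 2 + (β:ℂ) * z0 * deriv p z0) (p z0 ^ 2)
      rw [show p z0 ^ 2 + (β:ℂ) * z0 * deriv p z0 - p z0 ^ 2
        = (β:ℂ) * z0 * deriv p z0 from by ring] at h2
      rw [hnt, hsq] at h2; linarith
    have ht0 : 0 < t := Real.exp_pos _
    have hmt : β * t ≤ β * m * t := by
      have h := mul_le_mul_of_nonneg_left hm1 (mul_pos hβ0 ht0).le
      nlinarith [h]
    have hfinal := real_ineq hβ htlb htub
    linarith
  have hne : ∀ z ∈ ball (0:ℂ) 1, p z ≠ 0 := by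
    intro z hz
    obtain ⟨u, hu, hue⟩ := hmain z hz
    rw [← hue]; exact Complex.exp_ne_zero u
  obtain ⟨v, hv0, hvd, hvexp⟩ := log_on_ball (p := p) hp hne hp0 one_pos
  have hle : ∀ z ∈ ball (0:ℂ) 1, ‖v z‖ ≤ 1 := by
    apply branch_le isOpen_ball (convex_ball (0:ℂ) 1).isPreconnected (subset_refl _)
      (fun z hz => (hvd z hz).differentiableAt.continuousAt.continuousWithinAt)
      (by simp) hv0
    intro z hz
    obtain ⟨u, hu, hue⟩ := hmain z hz
    have hee : Complex.exp (v z) = Complex.exp u := by rw [hvexp z hz, ← hue]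
    obtain ⟨n, hn⟩ := Complex.exp_eq_exp_iff_exists_int.mp hee
    exact ⟨u, n, (le_of_lt (by simpa [mem_ball, dist_zero_right] using hu)), hn⟩
  have hvlt : ∀ z ∈ unitDisk, ‖v z‖ < 1 := by
    intro z hz
    obtain ⟨u, hu, hue⟩ := hmain z hz
    have hee : Complex.exp (v z) = Complex.exp u := by rw [hvexp z hz, ← hue]
    obtain ⟨n, hn⟩ := Complex.exp_eq_exp_iff_exists_int.mp hee
    have hun : ‖u‖ < 1 := by simpa [mem_ball, dist_zero_right] using hu
    have := eq_of_small_diff hn (hle z hz) hun.le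
    rw [this]; exact hun
  exact ⟨v, fun z hz => (hvd z hz).differentiableAt.differentiableWithinAt, hv0, hvlt,
    fun z hz => (hvexp z hz).symm⟩
end
end

section
/- Let β be a real number with β ≥ e + e⁻², and let p ∈ H₁ with p(z) ≠ 0 for all z ∈ 𝔻. If the function z ↦ p(z)² + β·z·p′(z)/p(z) is subordinate to z ↦ e^z on 𝔻, then p is subordinate to z ↦ e^z on 𝔻. -/
open Complex

noncomputable section

/-! Let `q = log p`, normalised by `q 0 = 0`; it is enough to show `‖q‖ < 1` on the disk.
Otherwise Jack's lemma gives `z₀` with `‖q z₀‖ = 1` and `z₀ q'(z₀) = m q(z₀)` for a real `m ≥ 1`,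
so that at `z₀` the subordinate function takes the value `exp (2ζ) + β m ζ` with `ζ = q z₀`
on the unit circle. Such a value is never `exp u` with `‖u‖ < 1`: when `Re ζ ≤ 0` its real
part is `≤ 0 < Re (exp u)`, and when `Re ζ ≥ 0` its modulus is at least `β m ≥ e > ‖exp u‖`. -/

open ComplexConjugate Metric Set Filter

theorem exists_log_of_differentiableOn_ball {p : ℂ → ℂ} {c : ℂ} {r : ℝ}
    (hp : DifferentiableOn ℂ p (ball c r)) (hpne : ∀ z ∈ ball c r, p z ≠ 0) {a : ℂ}
    (ha : exp a = p c) :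
    ∃ q : ℂ → ℂ, q c = a ∧ (∀ z ∈ ball c r, HasDerivAt q (logDeriv p z) z) ∧
      ∀ z ∈ ball c r, exp (q z) = p z := by
  have hdiff : DifferentiableOn ℂ (logDeriv p) (ball c r) :=
    ((hp.analyticOnNhd isOpen_ball).deriv.differentiableOn).div hp hpne
  obtain ⟨q, hqc, hq⟩ := hdiff.isExactOn_ball.with_val_at c a
  refine ⟨q, hqc, hq, fun z hz => ?_⟩
  have hp' : ∀ w ∈ ball c r, HasDerivAt p (deriv p w) w := fun w hw =>
    (hp.differentiableAt (isOpen_ball.mem_nhds hw)).hasDerivAt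
  have hF : ∀ w ∈ ball c r, HasDerivAt (fun w => p w * exp (-q w)) 0 w := by
    intro w hw
    refine ((hp' w hw).mul (hq w hw).neg.cexp).congr_deriv ?_
    rw [logDeriv_apply]
    field_simp [hpne w hw]
    ring
  have hconst := isOpen_ball.is_const_of_deriv_eq_zero (convex_ball c r).isPreconnected
    (fun w hw => (hF w hw).differentiableAt.differentiableWithinAt)
    (fun w hw => (hF w hw).deriv) hz (mem_ball_self (pos_of_mem_ball hz))
  rw [hqc, ← ha, ← exp_add, add_neg_cancel, exp_zero, exp_neg, mul_inv_eq_one₀ (exp_ne_zero _)]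
    at hconst
  exact hconst.symm

theorem exists_norm_eq_one_of_one_le_norm {E F : Type*} [NormedAddCommGroup E] [NormedSpace ℝ E]
    [ProperSpace E] [NormedAddCommGroup F] {q : E → F} (hq : ContinuousOn q (ball 0 1))
    (hq0 : ‖q 0‖ < 1) {z₁ : E} (hz₁ : z₁ ∈ ball 0 1) (h : 1 ≤ ‖q z₁‖) :
    ∃ w ∈ ball (0 : E) 1, ‖q w‖ = 1 ∧ MapsTo q (ball 0 ‖w‖) (ball 0 1) ∧
      MapsTo q (closedBall 0 ‖w‖) (closedBall 0 1) := by
  have hsub : closedBall (0 : E) ‖z₁‖ ⊆ ball 0 1 :=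
    closedBall_subset_ball (mem_ball_zero_iff.mp hz₁)
  set K := closedBall (0 : E) ‖z₁‖ ∩ q ⁻¹' {y | 1 ≤ ‖y‖}
  have hK : IsCompact K := (isCompact_closedBall 0 ‖z₁‖).of_isClosed_subset
    ((hq.mono hsub).preimage_isClosed_of_isClosed isClosed_closedBall
      (isClosed_le continuous_const continuous_norm)) inter_subset_left
  obtain ⟨w, hwK, hwmin⟩ :=
    hK.exists_isMinOn ⟨z₁, mem_closedBall_zero_iff.mpr le_rfl, h⟩ continuous_norm.continuousOn
  have hwsub : closedBall (0 : E) ‖w‖ ⊆ ball 0 1 :=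
    (closedBall_subset_closedBall (mem_closedBall_zero_iff.mp hwK.1)).trans hsub
  have hball : MapsTo q (ball 0 ‖w‖) (ball 0 1) := by
    intro z hz
    rw [mem_ball_zero_iff] at hz ⊢
    by_contra! hqz
    have hzK : z ∈ K := ⟨ball_subset_closedBall.trans (closedBall_subset_closedBall
      (mem_closedBall_zero_iff.mp hwK.1)) (mem_ball_zero_iff.mpr hz), hqz⟩
    exact (hwmin hzK).not_gt hz
  have hw0 : ‖w‖ ≠ 0 := by
    rintro hw
    rw [norm_eq_zero.mp hw] at hwK
    exact hq0.not_ge hwK.2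
  have hclosed : MapsTo q (closedBall 0 ‖w‖) (closedBall 0 1) := by
    have hS : IsClosed (closedBall (0 : E) ‖w‖ ∩ q ⁻¹' closedBall 0 1) :=
      (hq.mono hwsub).preimage_isClosed_of_isClosed isClosed_closedBall isClosed_closedBall
    intro z hz
    rw [← closure_ball 0 hw0] at hz
    exact (hS.closure_subset_iff.mpr (fun y hy =>
      ⟨ball_subset_closedBall hy, ball_subset_closedBall (hball hy)⟩) hz).2
  refine ⟨w, hwsub (mem_closedBall_zero_iff.mpr le_rfl), le_antisymm ?_ hwK.2, hball, hclosed⟩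
  simpa using hclosed (mem_closedBall_zero_iff.mpr le_rfl)

theorem hasDerivAt_norm_sq_comp {q : ℂ → ℂ} {γ : ℝ → ℂ} {t : ℝ} {v d : ℂ}
    (hq : HasDerivAt q d (γ t)) (hγ : HasDerivAt γ v t) :
    HasDerivAt (fun s => ‖q (γ s)‖ ^ 2) (2 * (v * d * conj (q (γ t))).re) t := by
  simpa [Complex.inner, mul_comm v d] using (hq.comp t hγ).norm_sq

theorem one_le_re_mul_deriv_mul_conj {q : ℂ → ℂ} {z₀ d : ℂ} (hd : HasDerivAt q d z₀)
    (hq : ∀ t ∈ Ioo (0 : ℝ) 1, ‖q (t * z₀)‖ ≤ t) (h1 : ‖q z₀‖ = 1) :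
    1 ≤ (z₀ * d * conj (q z₀)).re := by
  have hγ : HasDerivAt (fun t : ℝ => (t : ℂ) * z₀) z₀ 1 := by
    simpa using ofRealCLM.hasDerivAt.mul_const z₀
  have hderiv : HasDerivAt (fun t : ℝ => ‖q (t * z₀)‖ ^ 2 - t ^ 2)
      (2 * (z₀ * d * conj (q z₀)).re - 2) 1 := by
    have hd' : HasDerivAt q d ((1 : ℝ) * z₀) := by rwa [ofReal_one, one_mul]
    refine ((hasDerivAt_norm_sq_comp (γ := fun t : ℝ => (t : ℂ) * z₀) hd' hγ).fun_sub
      (hasDerivAt_pow 2 (1 : ℝ))).congr_deriv ?_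
    norm_num
  have hmax : IsLocalMaxOn (fun t : ℝ => ‖q (t * z₀)‖ ^ 2 - t ^ 2) (Iic 1) 1 := by
    filter_upwards [Ioc_mem_nhdsLE zero_lt_one] with t ht
    rcases ht.2.lt_or_eq with ht1 | rfl
    · have := hq t ⟨ht.1, ht1⟩
      simp only [ofReal_one, one_mul, h1]
      nlinarith [norm_nonneg (q (t * z₀))]
    · simp
  have hcone : (-1 : ℝ) ∈ posTangentConeAt (Iic (1 : ℝ)) 1 :=
    mem_posTangentConeAt_of_segment_subset ((convex_Iic 1).segment_subset (mem_Iic.mpr le_rfl)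
      (by norm_num))
  have := hmax.hasFDerivWithinAt_nonpos hderiv.hasDerivWithinAt.hasFDerivWithinAt hcone
  rw [ContinuousLinearMap.toSpanSingleton_apply, smul_eq_mul] at this
  linarith

theorem im_mul_deriv_mul_conj_eq_zero {q : ℂ → ℂ} {z₀ d : ℂ} (hd : HasDerivAt q d z₀)
    (hmax : ∀ θ : ℝ, ‖q (z₀ * exp (θ * I))‖ ≤ ‖q z₀‖) : (z₀ * d * conj (q z₀)).im = 0 := by
  have hγ : HasDerivAt (fun θ : ℝ => z₀ * exp (θ * I)) (z₀ * I) 0 := by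
    simpa using ((ofRealCLM.hasDerivAt (x := 0)).mul_const I).cexp.const_mul z₀
  have hd' : HasDerivAt q d (z₀ * exp ((0 : ℝ) * I)) := by simpa using hd
  have hmax' : IsLocalMax (fun θ : ℝ => ‖q (z₀ * exp (θ * I))‖ ^ 2) 0 :=
    Eventually.of_forall fun θ => by
      simpa using pow_le_pow_left₀ (norm_nonneg _) (hmax θ) 2
  have := hmax'.hasDerivAt_eq_zero (hasDerivAt_norm_sq_comp hd' hγ)
  simp only [ofReal_zero, zero_mul, exp_zero, mul_one] at this
  have e : (z₀ * I * d * conj (q z₀)).re = -(z₀ * d * conj (q z₀)).im := by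
    rw [mul_right_comm z₀ I, mul_right_comm _ I, mul_I_re]
  linarith

/-- Jack's lemma. -/
theorem exists_mul_deriv_eq_real_mul_of_one_le_norm {q : ℂ → ℂ}
    (hq : DifferentiableOn ℂ q (ball 0 1)) (hq0 : q 0 = 0) {z₁ : ℂ} (hz₁ : z₁ ∈ ball (0 : ℂ) 1)
    (h : 1 ≤ ‖q z₁‖) :
    ∃ z₀ ∈ ball (0 : ℂ) 1, ‖q z₀‖ = 1 ∧ ∃ m : ℝ, 1 ≤ m ∧ z₀ * deriv q z₀ = m * q z₀ := by
  obtain ⟨z₀, hz₀, hnorm, hball, hclosed⟩ :=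
    exists_norm_eq_one_of_one_le_norm hq.continuousOn (by simp [hq0]) hz₁ h
  have hd : HasDerivAt q (deriv q z₀) z₀ :=
    (hq.differentiableAt (isOpen_ball.mem_nhds hz₀)).hasDerivAt
  have hr : 0 < ‖z₀‖ := norm_pos_iff.mpr (by rintro rfl; simp [hq0] at hnorm)
  have hschwarz : ∀ t ∈ Ioo (0 : ℝ) 1, ‖q (t * z₀)‖ ≤ t := by
    intro t ht
    have hmem : (t : ℂ) * z₀ ∈ ball (0 : ℂ) ‖z₀‖ := by
      rw [mem_ball_zero_iff, norm_mul, norm_real, Real.norm_of_nonneg ht.1.le]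
      exact mul_lt_of_lt_one_left hr ht.2
    have hmaps : MapsTo q (ball 0 ‖z₀‖) (closedBall (q 0) 1) := by
      rw [hq0]; exact hball.mono_right ball_subset_closedBall
    have := dist_le_div_mul_dist_of_mapsTo_ball
      (hq.mono (ball_subset_ball (mem_ball_zero_iff.mp hz₀).le)) hmaps hmem
    rw [hq0, dist_zero_right, dist_zero_right, norm_mul, norm_real,
      Real.norm_of_nonneg ht.1.le] at this
    rwa [one_div, mul_comm t, inv_mul_cancel_left₀ hr.ne'] at this
  have hre := one_le_re_mul_deriv_mul_conj hd hschwarz hnorm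
  have him := im_mul_deriv_mul_conj_eq_zero hd fun θ => by
    rw [hnorm, ← mem_closedBall_zero_iff]
    exact hclosed (by simp [norm_exp_ofReal_mul_I])
  refine ⟨z₀, hz₀, hnorm, _, hre, ?_⟩
  rw [show ((z₀ * deriv q z₀ * conj (q z₀)).re : ℂ) = z₀ * deriv q z₀ * conj (q z₀) from
    Complex.ext rfl (by simp [him]), mul_assoc _ (conj _), conj_mul', hnorm]
  simp

theorem abs_two_mul_sin_sub_le_abs {θ : ℝ} (hθ : |θ| ≤ Real.pi) :
    |2 * Real.sin θ - θ| ≤ |θ| := by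
  rcases le_total 0 θ with h | h
  · rw [abs_of_nonneg h] at hθ ⊢
    have := Real.sin_le h
    have := Real.sin_nonneg_of_nonneg_of_le_pi h hθ
    exact abs_le.mpr ⟨by linarith, by linarith⟩
  · rw [abs_of_nonpos h] at hθ ⊢
    have := Real.sin_le (neg_nonneg.mpr h)
    have := Real.sin_nonneg_of_nonneg_of_le_pi (neg_nonneg.mpr h) hθ
    rw [Real.sin_neg] at *
    exact abs_le.mpr ⟨by linarith, by linarith⟩

theorem re_exp_two_mul_mul_conj_nonneg {ζ : ℂ} (hζ : ‖ζ‖ = 1) (hre : 0 ≤ ζ.re) :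
    0 ≤ (exp (2 * ζ) * conj ζ).re := by
  -- With `θ = arg ζ` the real part is `exp (2 cos θ) * cos (2 sin θ - θ)`.
  have hζ0 : ζ ≠ 0 := norm_ne_zero_iff.mp (by rw [hζ]; exact one_ne_zero)
  have hθ : |arg ζ| ≤ Real.pi / 2 := abs_arg_le_pi_div_two_iff.mpr hre
  have hcos : 0 ≤ Real.cos (2 * Real.sin (arg ζ) - arg ζ) := by
    have h := (abs_two_mul_sin_sub_le_abs (hθ.trans (by linarith [Real.pi_pos]))).trans hθ
    exact Real.cos_nonneg_of_neg_pi_div_two_le_of_le (abs_le.mp h).1 (abs_le.mp h).2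
  rw [Real.cos_sub, cos_arg hζ0, sin_arg, hζ, div_one, div_one] at hcos
  have hexp : (exp (2 * ζ) * conj ζ).re
      = Real.exp (2 * ζ.re) * (Real.cos (2 * ζ.im) * ζ.re + Real.sin (2 * ζ.im) * ζ.im) := by
    simp [exp_re, exp_im, mul_re, mul_im]
    ring
  rw [hexp]
  exact mul_nonneg (Real.exp_pos _).le hcos

theorem re_exp_two_mul_add_mul_nonpos {ζ : ℂ} {s : ℝ} (hζ : ‖ζ‖ = 1) (hre : ζ.re ≤ 0)
    (hs : 2 ≤ s) : (exp (2 * ζ) + s * ζ).re ≤ 0 := by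
  have hsq : ζ.re ^ 2 + ζ.im ^ 2 = 1 := by
    have h := Complex.sq_norm ζ
    rw [hζ, normSq_apply] at h
    linarith
  have hre' : (exp (2 * ζ) + s * ζ).re
      = Real.exp (2 * ζ.re) * Real.cos (2 * ζ.im) + s * ζ.re := by
    simp [exp_re]
  rw [hre']
  rcases le_or_gt (Real.cos (2 * ζ.im)) 0 with hc | hc
  · nlinarith [Real.exp_pos (2 * ζ.re)]
  · -- `cos (2 * ζ.im) > 0` forces `|ζ.im| < π / 4`, hence `ζ.re < -1 / 2`.
    have him : |2 * ζ.im| < Real.pi / 2 := by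
      by_contra! h
      have hle : |2 * ζ.im| ≤ Real.pi + Real.pi / 2 := by
        rw [abs_le]; constructor <;> nlinarith [Real.pi_gt_three]
      exact hc.not_ge (Real.cos_abs (2 * ζ.im) ▸ Real.cos_nonpos_of_pi_div_two_le_of_le h hle)
    have hre_lt : ζ.re < -1 / 2 := by
      have := abs_lt.mp him
      nlinarith [Real.pi_lt_d2]
    nlinarith [Real.exp_le_one_iff.mpr (by linarith : 2 * ζ.re ≤ 0), Real.cos_le_one (2 * ζ.im),
      Real.exp_pos (2 * ζ.re)]

theorem le_norm_exp_two_mul_add_mul {ζ : ℂ} {s : ℝ} (hζ : ‖ζ‖ = 1) (hre : 0 ≤ ζ.re) :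
    s ≤ ‖exp (2 * ζ) + s * ζ‖ := by
  have hconj : ζ * conj ζ = 1 := by rw [mul_conj', hζ]; norm_num
  calc s ≤ (exp (2 * ζ) * conj ζ).re + s :=
        le_add_of_nonneg_left (re_exp_two_mul_mul_conj_nonneg hζ hre)
    _ = ((exp (2 * ζ) + s * ζ) * conj ζ).re := by
      rw [add_mul, mul_assoc, hconj, mul_one, add_re, ofReal_re]
    _ ≤ ‖(exp (2 * ζ) + s * ζ) * conj ζ‖ := re_le_norm _
    _ = ‖exp (2 * ζ) + s * ζ‖ := by rw [norm_mul, RCLike.norm_conj, hζ, mul_one]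

theorem exp_ne_exp_two_mul_add_mul {ζ u : ℂ} {s : ℝ} (hζ : ‖ζ‖ = 1) (hs : Real.exp 1 ≤ s)
    (hu : ‖u‖ < 1) : exp u ≠ exp (2 * ζ) + s * ζ := by
  intro h
  rcases le_total ζ.re 0 with hre | hre
  · have him : |u.im| < Real.pi / 2 := by
      linarith [abs_im_le_norm u, Real.pi_gt_three]
    have hpos : 0 < (exp u).re := by
      rw [exp_re]
      exact mul_pos (Real.exp_pos _) (Real.cos_pos_of_mem_Ioo (abs_lt.mp him))
    have := re_exp_two_mul_add_mul_nonpos (s := s) hζ hre (by linarith [Real.exp_one_gt_d9])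
    rw [← h] at this
    linarith
  · have hlt : ‖exp u‖ < Real.exp 1 := by
      rw [norm_exp, Real.exp_lt_exp]
      exact (re_le_norm u).trans_lt hu
    have := le_norm_exp_two_mul_add_mul (s := s) hζ hre
    rw [← h] at this
    linarith

theorem stmt_14 (β : ℝ) (hβ : Real.exp 1 + (Real.exp 1 ^ 2)⁻¹ ≤ β)
    (p : ℂ → ℂ) (hp : DifferentiableOn ℂ p unitDisk) (hp0 : p 0 = 1)
    (hpne : ∀ z ∈ unitDisk, p z ≠ 0)
    (hsub : Subord (fun z => (p z) ^ 2 + (β : ℂ) * z * deriv p z / p z)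
      Complex.exp) :
    Subord p Complex.exp := by
  obtain ⟨q, hq0, hq', hexp⟩ :=
    exists_log_of_differentiableOn_ball hp hpne (a := 0) (by rw [exp_zero, hp0])
  have hqd : DifferentiableOn ℂ q unitDisk := fun z hz =>
    (hq' z hz).differentiableAt.differentiableWithinAt
  refine ⟨q, hqd, hq0, fun z hz => ?_, fun z hz => (hexp z hz).symm⟩
  by_contra! h
  obtain ⟨z₀, hz₀, hnorm, m, hm, hjack⟩ :=
    exists_mul_deriv_eq_real_mul_of_one_le_norm hqd hq0 hz h
  obtain ⟨w, -, -, hw, hpw⟩ := hsub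
  have hβe : Real.exp 1 ≤ β := le_of_add_le_of_nonneg_left hβ (by positivity)
  have hβm : Real.exp 1 ≤ β * m :=
    hβe.trans (le_mul_of_one_le_right ((Real.exp_pos 1).le.trans hβe) hm)
  refine exp_ne_exp_two_mul_add_mul hnorm hβm (hw z₀ hz₀) ?_
  have hlog : z₀ * (deriv p z₀ / p z₀) = m * q z₀ := by
    rw [← logDeriv_apply, ← (hq' z₀ hz₀).deriv, hjack]
  have hsq : p z₀ ^ 2 = exp (2 * q z₀) := by
    rw [← hexp z₀ hz₀, ← exp_nat_mul]
    norm_num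
  rw [← hpw z₀ hz₀]
  dsimp only
  rw [mul_div_assoc, mul_assoc, hlog, hsq]
  push_cast
  ring

end
end

section
/- Let β* be a positive real root of the equation 6e⁶ + 5x·e³ − x² + (−2e⁶ − 5x·e³ + x²)·ln(e³ + x) = 0 in the unknown x (numerically β* ≈ 104.122). Let β be a real number with β > β*, and let p ∈ H₁ with p(z) ≠ 0 for all z ∈ 𝔻. If the function z ↦ p(z)² + β·z·p′(z)/p(z)² is subordinate to z ↦ e^z on 𝔻, then p is subordinate to z ↦ e^z on 𝔻. -/
/-!
Write `p = exp ∘ L` with `L` holomorphic on the disk and `L 0 = 0`; it suffices that `‖L‖ < 1`.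
Otherwise let `z₀` be a point of least modulus with `‖L z₀‖ = 1`. Jack's lemma gives
`z₀ L'(z₀) = m L(z₀)` with `m ≥ 1`, so at `z₀` the function `p² + β z p' / p²` equals
`e^{2ζ} + β m ζ e^{-ζ}` with `ζ = L z₀`, of modulus at least `β / e - e²`. Subordination to `exp`
bounds that modulus by `e`, whence `β < e³ + e²`, whereas every positive root `β*` of the
equation is at least `5 e³`.
-/

open Complex

noncomputable section

open Metric Set Filter ComplexConjugate

theorem exists_exp_eqOn_ball_of_ne_zero {p : ℂ → ℂ} {c : ℂ} {r : ℝ}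
    (hp : DifferentiableOn ℂ p (ball c r)) (hpne : ∀ z ∈ ball c r, p z ≠ 0) :
    ∃ L : ℂ → ℂ, DifferentiableOn ℂ L (ball c r) ∧ L c = log (p c) ∧
      EqOn (fun z ↦ exp (L z)) p (ball c r) := by
  obtain ⟨L, hLc, hL⟩ :=
    ((hp.deriv isOpen_ball).div hp hpne).isExactOn_ball.with_val_at c (log (p c))
  have hLd : DifferentiableOn ℂ L (ball c r) := fun z hz ↦
    (hL z hz).differentiableAt.differentiableWithinAt
  refine ⟨L, hLd, hLc, ?_⟩
  rcases (ball c r).eq_empty_or_nonempty with hempty | hne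
  · simp [hempty]
  have hc : c ∈ ball c r := mem_ball_self (nonempty_ball.1 hne)
  have hlogDeriv : EqOn (logDeriv fun z ↦ exp (L z)) (logDeriv p) (ball c r) := fun z hz ↦ by
    simp only [logDeriv_apply, ((hL z hz).cexp).deriv, Pi.div_apply]
    field_simp
  obtain ⟨k, -, hk⟩ := (logDeriv_eqOn_iff hLd.cexp hp isOpen_ball
    (convex_ball c r).isPreconnected hpne fun _ _ ↦ exp_ne_zero _).1 hlogDeriv
  have hk1 : k = 1 := by
    have := hk hc
    simp only [hLc, exp_log (hpne c hc), Pi.smul_apply, smul_eq_mul] at this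
    exact (mul_eq_right₀ (hpne c hc)).1 this.symm
  simpa [hk1] using hk

theorem ContinuousOn.exists_norm_eq_and_isMaxOn_closedBall {E F : Type*}
    [NormedAddCommGroup E] [NormedSpace ℝ E] [ProperSpace E] [NormedAddCommGroup F]
    {f : E → F} {R a : ℝ} (hf : ContinuousOn f (ball 0 R)) (h0 : ‖f 0‖ < a) {z₁ : E}
    (hz₁ : z₁ ∈ ball 0 R) (h₁ : a ≤ ‖f z₁‖) :
    ∃ z₀ ∈ ball (0 : E) R, ‖f z₀‖ = a ∧ IsMaxOn (‖f ·‖) (closedBall 0 ‖z₀‖) z₀ := by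
  have hsub : ∀ {z : E}, z ∈ ball 0 R → closedBall (0 : E) ‖z‖ ⊆ ball 0 R := fun hz ↦
    closedBall_subset_ball (mem_ball_zero_iff.1 hz)
  have hK : IsCompact (closedBall 0 ‖z₁‖ ∩ (‖f ·‖) ⁻¹' Ici a) :=
    (isCompact_closedBall _ _).of_isClosed_subset
      ((hf.mono (hsub hz₁)).norm.preimage_isClosed_of_isClosed isClosed_closedBall isClosed_Ici)
      inter_subset_left
  obtain ⟨z₀, ⟨-, hz₀a : a ≤ ‖f z₀‖⟩, hmin⟩ :=
    hK.exists_isMinOn ⟨z₁, mem_closedBall_zero_iff.2 le_rfl, h₁⟩ continuous_norm.continuousOn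
  have hz₀z₁ : ‖z₀‖ ≤ ‖z₁‖ := hmin ⟨mem_closedBall_zero_iff.2 le_rfl, h₁⟩
  have hz₀R : z₀ ∈ ball 0 R := hsub hz₁ (mem_closedBall_zero_iff.2 hz₀z₁)
  have hz₀ : z₀ ≠ 0 := by rintro rfl; exact h0.not_ge hz₀a
  have hball : ball (0 : E) ‖z₀‖ ⊆ closedBall 0 ‖z₀‖ ∩ (‖f ·‖) ⁻¹' Iic a := fun z hz ↦ by
    rw [mem_ball_zero_iff] at hz
    refine ⟨mem_closedBall_zero_iff.2 hz.le, show ‖f z‖ ≤ a from not_lt.1 fun hza ↦ hz.not_ge ?_⟩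
    exact hmin ⟨mem_closedBall_zero_iff.2 (hz.le.trans hz₀z₁), hza.le⟩
  have hclosed : IsClosed (closedBall (0 : E) ‖z₀‖ ∩ (‖f ·‖) ⁻¹' Iic a) :=
    (hf.mono (hsub hz₀R)).norm.preimage_isClosed_of_isClosed isClosed_closedBall isClosed_Iic
  have hle : ∀ z ∈ closedBall (0 : E) ‖z₀‖, ‖f z‖ ≤ a := fun z hz ↦ by
    rw [← closure_ball 0 (norm_ne_zero_iff.2 hz₀)] at hz
    exact (closure_minimal hball hclosed hz).2
  have heq : ‖f z₀‖ = a := le_antisymm (hle z₀ (mem_closedBall_zero_iff.2 le_rfl)) hz₀a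
  exact ⟨z₀, hz₀R, heq, fun z hz ↦ (hle z hz).trans heq.ge⟩

section JackLemma

variable {f : ℂ → ℂ} {R : ℝ} {z₀ : ℂ}

theorem im_mul_deriv_mul_conj_eq_zero_of_isMaxOn (hf : DifferentiableOn ℂ f (ball 0 R))
    (hz₀ : z₀ ∈ ball 0 R) (hmax : IsMaxOn (‖f ·‖) (closedBall 0 ‖z₀‖) z₀) :
    (z₀ * deriv f z₀ * conj (f z₀)).im = 0 := by
  have hd : HasDerivAt f (deriv f z₀) (exp ((0 : ℝ) * I) * z₀) := by
    simpa using (hf.differentiableAt (isOpen_ball.mem_nhds hz₀)).hasDerivAt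
  have hrot : HasDerivAt (fun θ : ℝ ↦ exp (θ * I) * z₀) (I * z₀) 0 := by
    simpa using (((hasDerivAt_id (0 : ℝ)).ofReal_comp.mul_const I).cexp).mul_const z₀
  have hmaxθ : IsLocalMax (fun θ : ℝ ↦ ‖f (exp (θ * I) * z₀)‖ ^ 2) 0 := by
    refine Eventually.of_forall fun θ ↦ ?_
    have : exp (θ * I) * z₀ ∈ closedBall 0 ‖z₀‖ := by
      simp [norm_exp_ofReal_mul_I]
    simpa using pow_le_pow_left₀ (norm_nonneg _) (hmax this) 2
  have := hmaxθ.hasDerivAt_eq_zero (hd.comp (0 : ℝ) hrot).norm_sq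
  simp only [Complex.inner, Function.comp_apply, ofReal_zero, zero_mul, exp_zero, one_mul] at this
  rw [show deriv f z₀ * (I * z₀) * conj (f z₀) = z₀ * deriv f z₀ * conj (f z₀) * I by ring,
    mul_I_re] at this
  linarith

theorem sq_norm_le_re_mul_deriv_mul_conj_of_isMaxOn (hf : DifferentiableOn ℂ f (ball 0 R))
    (hz₀ : z₀ ∈ ball 0 R) (hf0 : f 0 = 0) (hmax : IsMaxOn (‖f ·‖) (closedBall 0 ‖z₀‖) z₀) :
    ‖f z₀‖ ^ 2 ≤ (z₀ * deriv f z₀ * conj (f z₀)).re := by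
  rcases eq_or_ne z₀ 0 with rfl | hz₀0
  · simp [hf0]
  have hschwarz : ∀ t ∈ Icc (0 : ℝ) 1, ‖f (t * z₀)‖ ≤ t * ‖f z₀‖ := by
    intro t ht
    rcases ht.2.eq_or_lt with rfl | ht1
    · simp
    have hmaps : MapsTo f (ball 0 ‖z₀‖) (closedBall (f 0) ‖f z₀‖) := fun z hz ↦ by
      rw [hf0, mem_closedBall_zero_iff]
      exact hmax (ball_subset_closedBall hz)
    have hmem : (t : ℂ) * z₀ ∈ ball 0 ‖z₀‖ := by
      rw [mem_ball_zero_iff, norm_mul, norm_real, Real.norm_of_nonneg ht.1]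
      exact mul_lt_of_lt_one_left (norm_pos_iff.2 hz₀0) ht1
    have := Complex.dist_le_div_mul_dist_of_mapsTo_ball
      (hf.mono (ball_subset_ball (mem_ball_zero_iff.1 hz₀).le)) hmaps hmem
    rw [hf0, dist_zero_right, dist_zero_right, norm_mul, norm_real,
      Real.norm_of_nonneg ht.1] at this
    calc ‖f (t * z₀)‖ ≤ ‖f z₀‖ / ‖z₀‖ * (t * ‖z₀‖) := this
      _ = t * ‖f z₀‖ := by field_simp
  have hd : HasDerivAt f (deriv f z₀) ((1 : ℝ) * z₀) := by
    simpa using (hf.differentiableAt (isOpen_ball.mem_nhds hz₀)).hasDerivAt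
  have hray : HasDerivAt (fun t : ℝ ↦ (t : ℂ) * z₀) z₀ 1 := by
    simpa using (hasDerivAt_id (1 : ℝ)).ofReal_comp.mul_const z₀
  have hψ := (hd.comp (1 : ℝ) hray).norm_sq.sub
    ((hasDerivAt_pow 2 (1 : ℝ)).const_mul (‖f z₀‖ ^ 2))
  have hmaxψ : IsLocalMaxOn
      (fun t : ℝ ↦ ‖(f ∘ fun t : ℝ ↦ (t : ℂ) * z₀) t‖ ^ 2 - ‖f z₀‖ ^ 2 * t ^ 2) (Icc 0 1) 1 := by
    refine eventually_nhdsWithin_of_forall fun t ht ↦ ?_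
    have := pow_le_pow_left₀ (norm_nonneg _) (hschwarz t ht) 2
    simp only [Function.comp_apply, ofReal_one, one_mul, one_pow, mul_one, sub_self]
    nlinarith
  have hsegment : segment ℝ (1 : ℝ) (1 + -1) ⊆ Icc 0 1 := by
    simp [segment_eq_uIcc]
  have := hmaxψ.hasFDerivWithinAt_nonpos hψ.hasDerivWithinAt.hasFDerivWithinAt
    (mem_posTangentConeAt_of_segment_subset hsegment)
  simp only [ContinuousLinearMap.toSpanSingleton_apply, smul_eq_mul, Function.comp_apply,
    ofReal_one, one_mul, Complex.inner, one_pow, mul_one, Nat.cast_ofNat] at this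
  rw [mul_comm z₀]
  linarith

/-- Jack's lemma. -/
theorem exists_one_le_and_mul_deriv_eq_of_isMaxOn (hf : DifferentiableOn ℂ f (ball 0 R))
    (hz₀ : z₀ ∈ ball 0 R) (hf0 : f 0 = 0) (hmax : IsMaxOn (‖f ·‖) (closedBall 0 ‖z₀‖) z₀)
    (hfz₀ : f z₀ ≠ 0) : ∃ m : ℝ, 1 ≤ m ∧ z₀ * deriv f z₀ = m * f z₀ := by
  have hnorm : 0 < ‖f z₀‖ ^ 2 := by positivity
  have hreal : ((z₀ * deriv f z₀ * conj (f z₀)).re : ℂ) = z₀ * deriv f z₀ * conj (f z₀) :=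
    conj_eq_iff_re.1 (conj_eq_iff_im.2 (im_mul_deriv_mul_conj_eq_zero_of_isMaxOn hf hz₀ hmax))
  refine ⟨(z₀ * deriv f z₀ * conj (f z₀)).re / ‖f z₀‖ ^ 2,
    (one_le_div hnorm).2 (sq_norm_le_re_mul_deriv_mul_conj_of_isMaxOn hf hz₀ hf0 hmax), ?_⟩
  rw [ofReal_div, hreal, ofReal_pow, ← mul_conj']
  field_simp [hfz₀]

end JackLemma

theorem five_mul_exp_one_pow_three_le {βstar : ℝ} (hβstar : 0 < βstar)
    (hroot : 6 * Real.exp 1 ^ 6 + 5 * βstar * Real.exp 1 ^ 3 - βstar ^ 2 +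
        (-2 * Real.exp 1 ^ 6 - 5 * βstar * Real.exp 1 ^ 3 + βstar ^ 2) *
          Real.log (Real.exp 1 ^ 3 + βstar) = 0) :
    5 * Real.exp 1 ^ 3 ≤ βstar := by
  by_contra! hlt
  set u := Real.exp 1 ^ 3 with hu
  have hlog : 3 < Real.log (u + βstar) := by
    rw [Real.lt_log_iff_exp_lt (by positivity), hu, Real.exp_one_pow]
    exact_mod_cast lt_add_of_pos_right _ hβstar
  have hcoeff : -2 * u ^ 2 - 5 * βstar * u + βstar ^ 2 < 0 := by nlinarith
  -- with `log (u + βstar) > 3` the left side of `hroot` is below `2 βstar (βstar - 5 u) < 0`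
  rw [show Real.exp 1 ^ 6 = u ^ 2 by ring] at hroot
  nlinarith [mul_lt_mul_of_neg_left hlog hcoeff]

theorem div_exp_one_sub_exp_one_sq_le_norm {ζ : ℂ} (hζ : ‖ζ‖ = 1) {m β : ℝ} (hm : 1 ≤ m)
    (hβ : 0 ≤ β) : β / Real.exp 1 - Real.exp 1 ^ 2 ≤ ‖exp ζ ^ 2 + β * (m * ζ) / exp ζ‖ := by
  have hre : ζ.re ≤ 1 := hζ ▸ re_le_norm ζ
  have hsq : ‖exp ζ ^ 2‖ ≤ Real.exp 1 ^ 2 := by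
    rw [norm_pow, norm_exp]
    gcongr
  have hdiv : β / Real.exp 1 ≤ ‖β * (m * ζ) / exp ζ‖ := by
    rw [norm_div, norm_mul, norm_mul, hζ, norm_exp, norm_real, norm_real, Real.norm_of_nonneg hβ,
      Real.norm_of_nonneg (by linarith), mul_one]
    gcongr
    nlinarith
  have := norm_sub_norm_le (β * (m * ζ) / exp ζ) (-exp ζ ^ 2)
  rw [norm_neg, sub_neg_eq_add, add_comm] at this
  linarith

theorem stmt_15 (βstar : ℝ) (hβstar : 0 < βstar)
    (hroot : 6 * Real.exp 1 ^ 6 + 5 * βstar * Real.exp 1 ^ 3 - βstar ^ 2 +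
        (-2 * Real.exp 1 ^ 6 - 5 * βstar * Real.exp 1 ^ 3 + βstar ^ 2) *
          Real.log (Real.exp 1 ^ 3 + βstar) = 0)
    (β : ℝ) (hβ : βstar < β)
    (p : ℂ → ℂ) (hp : DifferentiableOn ℂ p unitDisk) (hp0 : p 0 = 1)
    (hpne : ∀ z ∈ unitDisk, p z ≠ 0)
    (hsub : Subord (fun z => (p z) ^ 2 + (β : ℂ) * z * deriv p z / (p z) ^ 2)
      Complex.exp) :
    Subord p Complex.exp := by
  obtain ⟨L, hLd, hL0, hpL⟩ := exists_exp_eqOn_ball_of_ne_zero hp hpne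
  rw [hp0, log_one] at hL0
  by_contra hnot
  obtain ⟨z₁, hz₁, h₁⟩ : ∃ z₁ ∈ unitDisk, 1 ≤ ‖L z₁‖ := by
    by_contra! h
    exact hnot ⟨L, hLd, hL0, h, fun z hz ↦ (hpL hz).symm⟩
  obtain ⟨z₀, hz₀, hLz₀, hmax⟩ :=
    hLd.continuousOn.exists_norm_eq_and_isMaxOn_closedBall (by simp [hL0]) hz₁ h₁
  obtain ⟨m, hm, hjack⟩ := exists_one_le_and_mul_deriv_eq_of_isMaxOn hLd hz₀ hL0 hmax
    (norm_ne_zero_iff.1 (hLz₀ ▸ one_ne_zero))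
  have hderiv : deriv p z₀ = exp (L z₀) * deriv L z₀ := by
    rw [← (hpL.eventuallyEq_of_mem (isOpen_ball.mem_nhds hz₀)).deriv_eq]
    exact ((hLd.differentiableAt (isOpen_ball.mem_nhds hz₀)).hasDerivAt.cexp).deriv
  obtain ⟨w, -, -, hw1, hw⟩ := hsub
  have hF : exp (L z₀) ^ 2 + β * (m * L z₀) / exp (L z₀) = exp (w z₀) := by
    rw [← hw z₀ hz₀, ← hjack]
    dsimp only
    rw [← hpL hz₀, hderiv]
    field_simp
  have hlower := div_exp_one_sub_exp_one_sq_le_norm hLz₀ hm (by linarith : 0 ≤ β)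
  rw [hF, norm_exp] at hlower
  have hupper : Real.exp (w z₀).re < Real.exp 1 :=
    Real.exp_lt_exp.2 ((re_le_norm _).trans_lt (hw1 z₀ hz₀))
  have hβ_lt : β < Real.exp 1 * (Real.exp 1 + Real.exp 1 ^ 2) := by
    rw [← div_lt_iff₀' (Real.exp_pos 1)]
    linarith
  have he : 1 < Real.exp 1 := Real.one_lt_exp_iff.2 one_pos
  nlinarith [five_mul_exp_one_pow_three_le hβstar hroot]
end
end

section
/- Let β be a real number with β ≥ e³ + e, and let p ∈ H₁. If the function z ↦ p(z) + β·z·p(z)·p′(z) is subordinate to z ↦ e^z on 𝔻, then p is subordinate to z ↦ e^z on 𝔻. -/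
open Complex

noncomputable section

/-
Let `E = exp(𝔻)`. If `p(𝔻) ⊆ E`, then `log ∘ p` is the required Schwarz function. Otherwise take a
point `z₀` of smallest modulus with `p(z₀) ∉ E`; then `p(z₀) = e^ζ` with `|ζ| = 1`, and
`w = log ∘ p` satisfies `|w| < 1 = |w(z₀)|` on `|z| < |z₀|`. Jack's lemma gives
`|z₀ p'(z₀)| ≥ |p(z₀)| ≥ e⁻¹`, hence `|p + β z₀ p p'| ≥ β e^{2 Re ζ} - e^{Re ζ} ≥ e` at `z₀`,
contradicting the subordination of `p + β z p p'` to `e^z`.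
-/

open Metric Set

namespace Complex

theorem log_exp_of_norm_le_one {ζ : ℂ} (h : ‖ζ‖ ≤ 1) : log (exp ζ) = ζ := by
  have him : |ζ.im| < Real.pi :=
    (abs_im_le_norm ζ).trans_lt (h.trans_lt (by linarith [Real.pi_gt_three]))
  rw [abs_lt] at him
  exact log_exp him.1 him.2.le

theorem exp_mem_slitPlane_of_norm_le_one {ζ : ℂ} (h : ‖ζ‖ ≤ 1) : exp ζ ∈ slitPlane := by
  refine mem_slitPlane_iff_arg.2 ⟨fun harg => ?_, exp_ne_zero ζ⟩
  have him : ζ.im = Real.pi := by rw [← harg, ← log_im, log_exp_of_norm_le_one h]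
  linarith [(abs_im_le_norm ζ).trans h, le_abs_self ζ.im, Real.pi_gt_three]

theorem norm_log_lt_one_of_mem_exp_image_ball {u : ℂ} (hu : u ∈ exp '' ball 0 1) :
    ‖log u‖ < 1 := by
  obtain ⟨ζ, hζ, rfl⟩ := hu
  rw [mem_ball_zero_iff] at hζ
  rwa [log_exp_of_norm_le_one hζ.le]

theorem closure_exp_image_ball_subset : closure (exp '' ball 0 1) ⊆ exp '' closedBall 0 1 :=
  closure_minimal (image_mono ball_subset_closedBall)
    ((isCompact_closedBall 0 1).image continuous_exp).isClosed

theorem mem_slitPlane_of_mem_closure_exp_image_ball {u : ℂ}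
    (hu : u ∈ closure (exp '' ball 0 1)) : u ∈ slitPlane := by
  obtain ⟨ζ, hζ, rfl⟩ := closure_exp_image_ball_subset hu
  exact exp_mem_slitPlane_of_norm_le_one (mem_closedBall_zero_iff.1 hζ)

theorem norm_log_eq_one_of_mem_frontier_exp_image_ball {u : ℂ}
    (hu : u ∈ frontier (exp '' ball 0 1)) : ‖log u‖ = 1 := by
  rw [(isOpenMap_exp _ isOpen_ball).frontier_eq] at hu
  obtain ⟨ζ, hζ, rfl⟩ := closure_exp_image_ball_subset hu.1
  rw [mem_closedBall_zero_iff] at hζ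
  rw [log_exp_of_norm_le_one hζ]
  exact hζ.eq_or_lt.resolve_right fun h => hu.2 ⟨ζ, mem_ball_zero_iff.2 h, rfl⟩

end Complex

theorem exists_notMem_and_mapsTo_ball_norm_of_not_mapsTo {E Y : Type*} [NormedAddCommGroup E]
    [ProperSpace E] [TopologicalSpace Y] {f : E → Y} {U : Set Y} {R : ℝ}
    (hf : ContinuousOn f (ball 0 R)) (hU : IsOpen U) (h : ¬ MapsTo f (ball 0 R) U) :
    ∃ z₀ ∈ ball (0 : E) R, f z₀ ∉ U ∧ MapsTo f (ball 0 ‖z₀‖) U := by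
  obtain ⟨z₁, hz₁, hfz₁⟩ := not_forall₂.1 h
  have hsub : closedBall 0 ‖z₁‖ ⊆ ball (0 : E) R :=
    closedBall_subset_ball (mem_ball_zero_iff.1 hz₁)
  set K := closedBall 0 ‖z₁‖ ∩ f ⁻¹' Uᶜ
  have hK : IsCompact K := (isCompact_closedBall 0 _).of_isClosed_subset
    ((hf.mono hsub).preimage_isClosed_of_isClosed isClosed_closedBall hU.isClosed_compl)
    inter_subset_left
  obtain ⟨z₀, ⟨hz₀, hfz₀⟩, hmin⟩ :=
    hK.exists_isMinOn ⟨z₁, mem_closedBall_zero_iff.2 le_rfl, hfz₁⟩ continuous_norm.continuousOn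
  refine ⟨z₀, hsub hz₀, hfz₀, fun z hz => ?_⟩
  by_contra hfz
  have hz' : ‖z‖ < ‖z₀‖ := mem_ball_zero_iff.1 hz
  have hzK : z ∈ K :=
    ⟨mem_closedBall_zero_iff.2 (hz'.le.trans (mem_closedBall_zero_iff.1 hz₀)), hfz⟩
  exact (hmin hzK).not_gt hz'

theorem mem_frontier_of_mapsTo_ball_norm {E Y : Type*} [NormedAddCommGroup E] [NormedSpace ℝ E]
    [TopologicalSpace Y] {f : E → Y} {U : Set Y} {z₀ : E} (hU : IsOpen U) (hz₀ : z₀ ≠ 0)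
    (hf : ContinuousAt f z₀) (hmaps : MapsTo f (ball 0 ‖z₀‖) U) (hfz₀ : f z₀ ∉ U) :
    f z₀ ∈ frontier U := by
  rw [hU.frontier_eq]
  refine ⟨closure_mono hmaps.image_subset (hf.continuousWithinAt.mem_closure_image ?_), hfz₀⟩
  rw [closure_ball _ (norm_ne_zero_iff.2 hz₀)]
  exact mem_closedBall_zero_iff.2 le_rfl

theorem nonneg_of_hasDerivAt_of_isMaxOn_Icc {f : ℝ → ℝ} {f' a b : ℝ} (hab : a < b)
    (hf : HasDerivAt f f' b) (hmax : IsMaxOn f (Icc a b) b) : 0 ≤ f' := by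
  have hcone : a - b ∈ posTangentConeAt (Icc a b) b :=
    sub_mem_posTangentConeAt_of_segment_subset (by rw [segment_symm, segment_eq_Icc hab.le])
  have := (hmax.localize.on_subset subset_rfl).hasFDerivWithinAt_nonpos
    hf.hasFDerivAt.hasFDerivWithinAt hcone
  simp only [ContinuousLinearMap.toSpanSingleton_apply, smul_eq_mul] at this
  nlinarith

/-- Jack's lemma: by the Schwarz lemma `Re (w(t z₀) / w(z₀)) ≤ t` on `[0, 1]`, with equality at
`t = 1`, so the radial derivative there is at least `1`. -/
theorem one_le_re_mul_deriv_div_of_forall_norm_le {w : ℂ → ℂ} {z₀ : ℂ}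
    (hw : DifferentiableOn ℂ w (ball 0 ‖z₀‖)) (hwz₀ : DifferentiableAt ℂ w z₀) (hw0 : w 0 = 0)
    (hmax : ∀ z ∈ ball (0 : ℂ) ‖z₀‖, ‖w z‖ ≤ ‖w z₀‖) (hne : w z₀ ≠ 0) :
    1 ≤ (z₀ * deriv w z₀ / w z₀).re := by
  have hz₀ : ‖z₀‖ ≠ 0 := fun h0 => hne (by rw [norm_eq_zero.1 h0, hw0])
  have hschwarz : ∀ z ∈ ball (0 : ℂ) ‖z₀‖, ‖w z‖ ≤ ‖w z₀‖ / ‖z₀‖ * ‖z‖ := by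
    intro z hz
    have hmaps : MapsTo w (ball 0 ‖z₀‖) (closedBall (w 0) ‖w z₀‖) := fun x hx => by
      simpa [hw0] using hmax x hx
    simpa [hw0] using dist_le_div_mul_dist_of_mapsTo_ball hw hmaps hz
  set h : ℝ → ℝ := fun t => (w (t * z₀) / w z₀).re - t
  have hderiv : HasDerivAt h ((z₀ * deriv w z₀ / w z₀).re - 1) 1 := by
    have hc : HasDerivAt (fun u : ℂ => w (u * z₀) / w z₀) (z₀ * deriv w z₀ / w z₀)
        ((1 : ℝ) : ℂ) := by
      simpa [mul_comm] using (hwz₀.hasDerivAt.comp_of_eq (1 : ℂ) (hasDerivAt_mul_const z₀)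
        (one_mul z₀).symm).div_const (w z₀)
    exact hc.real_of_complex.sub (hasDerivAt_id 1)
  have h1 : h 1 = 0 := by simp [h, div_self hne]
  have hmaxh : IsMaxOn h (Icc 0 1) 1 := by
    intro t ht
    rcases eq_or_lt_of_le ht.2 with rfl | ht1
    · exact le_refl (h 1)
    have hnorm : ‖(t : ℂ) * z₀‖ = t * ‖z₀‖ := by
      rw [norm_mul, norm_real, Real.norm_of_nonneg ht.1]
    have hmem : (t : ℂ) * z₀ ∈ ball (0 : ℂ) ‖z₀‖ := by
      rw [mem_ball_zero_iff, hnorm]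
      exact mul_lt_of_lt_one_left (lt_of_le_of_ne (norm_nonneg _) hz₀.symm) ht1
    have hle := hschwarz _ hmem
    rw [hnorm] at hle
    have hre : (w (t * z₀) / w z₀).re ≤ t :=
      calc (w (t * z₀) / w z₀).re ≤ ‖w (t * z₀)‖ / ‖w z₀‖ := (re_le_norm _).trans (norm_div _ _).le
        _ ≤ t := by
          rw [div_le_iff₀ (norm_pos_iff.2 hne)]
          calc ‖w (t * z₀)‖ ≤ ‖w z₀‖ / ‖z₀‖ * (t * ‖z₀‖) := hle
            _ = t * ‖w z₀‖ := by field_simp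
    show h t ≤ h 1
    rw [h1]
    exact sub_nonpos.2 hre
  linarith [nonneg_of_hasDerivAt_of_isMaxOn_Icc one_pos hderiv hmaxh]

/-- For `β = e³ + e` this is an equality at `t = e⁻¹`. -/
theorem exp_one_le_mul_sq_sub {β t : ℝ} (hβ : Real.exp 1 ^ 3 + Real.exp 1 ≤ β)
    (ht : Real.exp (-1) ≤ t) : Real.exp 1 ≤ β * t ^ 2 - t := by
  have he : Real.exp 1 * Real.exp (-1) = 1 := by rw [← Real.exp_add]; simp
  have he0 := Real.exp_pos 1
  have ht0 : 0 < t := (Real.exp_pos _).trans_le ht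
  have h1 : 1 ≤ Real.exp 1 * t := calc
    1 = Real.exp 1 * Real.exp (-1) := he.symm
    _ ≤ Real.exp 1 * t := by gcongr
  nlinarith [mul_nonneg (sub_nonneg.2 h1)
      (by positivity : 0 ≤ (Real.exp 1 ^ 2 + 1) * t + Real.exp 1),
    mul_nonneg (sub_nonneg.2 hβ) (sq_nonneg t)]

theorem exp_one_le_norm_add_mul {β : ℝ} {a b : ℂ} (hβ : Real.exp 1 ^ 3 + Real.exp 1 ≤ β)
    (ha : Real.exp (-1) ≤ ‖a‖) (hab : ‖a‖ ≤ ‖b‖) : Real.exp 1 ≤ ‖a + β * a * b‖ := by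
  have hβ0 : 0 ≤ β := le_trans (by positivity) hβ
  calc Real.exp 1 ≤ β * ‖a‖ ^ 2 - ‖a‖ := exp_one_le_mul_sq_sub hβ ha
    _ ≤ ‖β * a * b‖ - ‖a‖ := by
      rw [norm_mul, norm_mul, norm_real, Real.norm_of_nonneg hβ0, sq, mul_assoc]
      gcongr
    _ ≤ ‖a + β * a * b‖ := by
      rw [add_comm]; exact norm_sub_le_norm_add _ _

theorem subord_exp_of_mapsTo {p : ℂ → ℂ} (hp : DifferentiableOn ℂ p unitDisk) (hp0 : p 0 = 1)
    (hmaps : MapsTo p unitDisk (exp '' ball 0 1)) : Subord p exp := by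
  have hslit : ∀ z ∈ unitDisk, p z ∈ slitPlane := fun z hz =>
    mem_slitPlane_of_mem_closure_exp_image_ball (subset_closure (hmaps hz))
  refine ⟨fun z => log (p z), fun z hz => ?_, by simp [hp0],
    fun z hz => norm_log_lt_one_of_mem_exp_image_ball (hmaps hz),
    fun z hz => (exp_log (slitPlane_ne_zero (hslit z hz))).symm⟩
  exact (((hp z hz).differentiableAt (isOpen_ball.mem_nhds hz)).clog
    (hslit z hz)).differentiableWithinAt

theorem exists_exp_neg_one_le_norm_le_norm_mul_deriv {p : ℂ → ℂ}
    (hp : DifferentiableOn ℂ p unitDisk) (hp0 : p 0 = 1)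
    (hmaps : ¬ MapsTo p unitDisk (exp '' ball 0 1)) :
    ∃ z₀ ∈ unitDisk, Real.exp (-1) ≤ ‖p z₀‖ ∧ ‖p z₀‖ ≤ ‖z₀ * deriv p z₀‖ := by
  have hE : IsOpen (exp '' ball (0 : ℂ) 1) := isOpenMap_exp _ isOpen_ball
  obtain ⟨z₀, hz₀, hpz₀, hball⟩ :=
    exists_notMem_and_mapsTo_ball_norm_of_not_mapsTo hp.continuousOn hE hmaps
  have hdiff : ∀ z ∈ unitDisk, DifferentiableAt ℂ p z := fun z hz =>
    (hp z hz).differentiableAt (isOpen_ball.mem_nhds hz)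
  have hz₀0 : z₀ ≠ 0 := by
    rintro rfl
    exact hpz₀ (hp0 ▸ ⟨0, mem_ball_self one_pos, exp_zero⟩)
  have hfront : p z₀ ∈ frontier (exp '' ball 0 1) :=
    mem_frontier_of_mapsTo_ball_norm hE hz₀0 (hdiff z₀ hz₀).continuousAt hball hpz₀
  have hslit : p z₀ ∈ slitPlane := mem_slitPlane_of_mem_closure_exp_image_ball hfront.1
  have hlog1 : ‖log (p z₀)‖ = 1 := norm_log_eq_one_of_mem_frontier_exp_image_ball hfront
  have hsub : ball (0 : ℂ) ‖z₀‖ ⊆ unitDisk := ball_subset_ball (mem_ball_zero_iff.1 hz₀).le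
  have hlogp : ∀ z ∈ unitDisk, p z ∈ slitPlane →
      HasDerivAt (fun z => log (p z)) ((p z)⁻¹ * deriv p z) z :=
    fun z hz hz' => (hasDerivAt_log hz').comp z (hdiff z hz).hasDerivAt
  have hjack := one_le_re_mul_deriv_div_of_forall_norm_le
    (fun z hz => (hlogp z (hsub hz) (mem_slitPlane_of_mem_closure_exp_image_ball
      (subset_closure (hball hz)))).differentiableAt.differentiableWithinAt)
    (hlogp z₀ hz₀ hslit).differentiableAt (by simp [hp0])
    (fun z hz => hlog1 ▸ (norm_log_lt_one_of_mem_exp_image_ball (hball hz)).le)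
    (fun h0 => by simp [h0] at hlog1)
  rw [(hlogp z₀ hz₀ hslit).deriv] at hjack
  refine ⟨z₀, hz₀, ?_, ?_⟩
  · rw [← Real.exp_log (norm_pos_iff.2 (slitPlane_ne_zero hslit)), ← log_re]
    exact Real.exp_le_exp.2 (by linarith [neg_abs_le (log (p z₀)).re, abs_re_le_norm (log (p z₀))])
  · have := hjack.trans (re_le_norm _)
    rw [norm_div, hlog1, div_one, ← mul_assoc, mul_comm z₀, mul_assoc, norm_mul, norm_inv,
      ← div_eq_inv_mul, one_le_div (norm_pos_iff.2 (slitPlane_ne_zero hslit))] at this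
    exact this

theorem stmt_16 (β : ℝ) (hβ : Real.exp 1 ^ 3 + Real.exp 1 ≤ β)
    (p : ℂ → ℂ) (hp : DifferentiableOn ℂ p unitDisk) (hp0 : p 0 = 1)
    (hsub : Subord (fun z => p z + (β : ℂ) * z * p z * deriv p z) Complex.exp) :
    Subord p Complex.exp := by
  by_contra hnot
  obtain ⟨z₀, hz₀, hlow, hle⟩ := exists_exp_neg_one_le_norm_le_norm_mul_deriv hp hp0
    fun hmaps => hnot (subord_exp_of_mapsTo hp hp0 hmaps)
  obtain ⟨w, -, -, hw1, hw⟩ := hsub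
  have hupper : ‖p z₀ + β * z₀ * p z₀ * deriv p z₀‖ < Real.exp 1 := by
    rw [show p z₀ + β * z₀ * p z₀ * deriv p z₀ = exp (w z₀) from hw z₀ hz₀, norm_exp]
    exact Real.exp_lt_exp.2 ((re_le_norm _).trans_lt (hw1 z₀ hz₀))
  have hlower : Real.exp 1 ≤ ‖p z₀ + β * z₀ * p z₀ * deriv p z₀‖ := by
    convert exp_one_le_norm_add_mul hβ hlow hle using 2
    ring
  exact hupper.not_ge hlower

end
end

section
/- Let β be a real number with β ≥ e³ + 1, and let p ∈ H₁. If the function z ↦ p(z)² + β·z·p(z)·p′(z) is subordinate to z ↦ e^z on 𝔻, then p is subordinate to z ↦ e^z on 𝔻. -/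
open Complex

noncomputable section

/-!
Put `Q = p ^ 2`. The hypothesis reads `Q + (β / 2) z Q' = exp ∘ ω` with `ω` a Schwarz function,
and this equation is solved by the radial average `Q z = ∫₀¹ exp (ω (t ^ (β / 2) z)) dt`.
Hence `Q` takes its values in every closed convex set containing `exp '' 𝔻`, in particular in
the truncated sector `expEnvelope`, on which `‖log‖ < 2`. So `w = (log Q) / 2` is a Schwarz
function with `exp w ^ 2 = p ^ 2`, and `p / exp w`, a continuous `±1`-valued function equal to `1`
at `0`, is identically `1` on the connected disk.
-/

open MeasureTheory Set

def expEnvelope : Set ℂ :=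
  {Q | Real.exp (-1) / 2 ≤ Q.re ∧ |Q.im| ≤ Real.tan 1 * Q.re ∧ ‖Q‖ ≤ Real.exp 1}

theorem convex_expEnvelope : Convex ℝ expEnvelope := by
  intro x ⟨hx₁, hx₂, hx₃⟩ y ⟨hy₁, hy₂, hy₃⟩ a b ha hb hab
  simp only [expEnvelope, mem_ofPred_eq, add_re, add_im, smul_re, smul_im, smul_eq_mul]
  refine ⟨?_, abs_le.2 ⟨?_, ?_⟩, ?_⟩
  · calc Real.exp (-1) / 2 = a * (Real.exp (-1) / 2) + b * (Real.exp (-1) / 2) := by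
          rw [← add_mul, hab, one_mul]
      _ ≤ a * x.re + b * y.re := by gcongr
  · nlinarith [mul_le_mul_of_nonneg_left (neg_le_of_abs_le hx₂) ha,
      mul_le_mul_of_nonneg_left (neg_le_of_abs_le hy₂) hb]
  · nlinarith [mul_le_mul_of_nonneg_left (le_of_abs_le hx₂) ha,
      mul_le_mul_of_nonneg_left (le_of_abs_le hy₂) hb]
  · calc ‖a • x + b • y‖ ≤ a * ‖x‖ + b * ‖y‖ := by
          refine (norm_add_le _ _).trans_eq ?_
          rw [norm_smul, norm_smul, Real.norm_of_nonneg ha, Real.norm_of_nonneg hb]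
      _ ≤ a * Real.exp 1 + b * Real.exp 1 := by gcongr
      _ = Real.exp 1 := by rw [← add_mul, hab, one_mul]

theorem isClosed_expEnvelope : IsClosed expEnvelope :=
  (isClosed_le continuous_const continuous_re).inter <|
    (isClosed_le (continuous_abs.comp continuous_im) (continuous_const.mul continuous_re)).inter
      (isClosed_le continuous_norm continuous_const)

theorem abs_sin_le_tan_one_mul_cos {y : ℝ} (hy : |y| ≤ 1) :
    |Real.sin y| ≤ Real.tan 1 * Real.cos y := by
  have hπ := Real.pi_gt_three
  have hsin : Real.sin (|y| - 1) ≤ 0 :=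
    Real.sin_nonpos_of_nonpos_of_neg_pi_le (by linarith) (by linarith [abs_nonneg y])
  rw [Real.sin_sub, Real.cos_abs] at hsin
  rw [Real.abs_sin_eq_sin_abs_of_abs_le_pi (by linarith), Real.tan_eq_sin_div_cos,
    div_mul_eq_mul_div, le_div_iff₀ Real.cos_one_pos]
  linarith

theorem exp_mem_expEnvelope {w : ℂ} (hw : ‖w‖ < 1) : exp w ∈ expEnvelope := by
  have hre := (abs_re_le_norm w).trans_lt hw
  have him := (abs_im_le_norm w).trans_lt hw
  have hexp : Real.exp (-1) ≤ Real.exp w.re := Real.exp_le_exp.2 (by linarith [(abs_lt.1 hre).1])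
  have hcos : 1 / 2 ≤ Real.cos w.im := by
    nlinarith [Real.one_sub_sq_div_two_le_cos (x := w.im), sq_abs w.im, abs_nonneg w.im]
  refine ⟨?_, ?_, ?_⟩
  · rw [exp_re]; nlinarith [Real.exp_pos (-1)]
  · rw [exp_re, exp_im, abs_mul, abs_of_pos (Real.exp_pos _), mul_left_comm]
    exact mul_le_mul_of_nonneg_left (abs_sin_le_tan_one_mul_cos him.le) (Real.exp_pos _).le
  · rw [norm_exp]; exact Real.exp_le_exp.2 (by linarith [(abs_lt.1 hre).2])

theorem re_pos_of_mem_expEnvelope {Q : ℂ} (hQ : Q ∈ expEnvelope) : 0 < Q.re :=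
  (by positivity : 0 < Real.exp (-1) / 2).trans_le hQ.1

theorem abs_arg_le_one_of_mem_expEnvelope {Q : ℂ} (hQ : Q ∈ expEnvelope) : |arg Q| ≤ 1 := by
  have hre := re_pos_of_mem_expEnvelope hQ
  have harg : arg Q = Real.arctan (Q.im / Q.re) := by
    rw [← tan_arg, Real.arctan_tan]
    all_goals linarith [abs_lt.1 (abs_arg_lt_pi_div_two_iff.2 (Or.inl hre))]
  have hslope : |Q.im / Q.re| ≤ Real.tan 1 := by
    rw [abs_div, abs_of_pos hre, div_le_iff₀ hre]; exact hQ.2.1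
  have hπ := Real.pi_gt_three
  have htan : Real.arctan (Real.tan 1) = 1 := Real.arctan_tan (by linarith) (by linarith)
  rw [harg, abs_le]
  constructor
  · rw [← htan, ← Real.arctan_neg]; exact Real.arctan_mono (neg_le_of_abs_le hslope)
  · rw [← htan]; exact Real.arctan_mono (le_of_abs_le hslope)

theorem norm_log_lt_two_of_mem_expEnvelope {Q : ℂ} (hQ : Q ∈ expEnvelope) :
    ‖log Q‖ < 2 := by
  have hnorm : 0 < ‖Q‖ := (re_pos_of_mem_expEnvelope hQ).trans_le (re_le_norm Q)
  have hup : Real.log ‖Q‖ ≤ 1 := by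
    simpa using Real.log_le_log hnorm hQ.2.2
  have hlow : -1 - Real.log 2 ≤ Real.log ‖Q‖ := by
    have := Real.log_le_log (by positivity) (hQ.1.trans (re_le_norm Q))
    rwa [Real.log_div (Real.exp_ne_zero _) two_ne_zero, Real.log_exp] at this
  have harg := abs_arg_le_one_of_mem_expEnvelope hQ
  have hlog2 := Real.log_two_lt_d9
  have hlog2' := Real.log_nonneg one_le_two
  -- `‖log Q‖ ^ 2 = (log ‖Q‖) ^ 2 + arg Q ^ 2 ≤ (1 + log 2) ^ 2 + 1 < 4`
  have hsq : ‖log Q‖ ^ 2 < 2 ^ 2 := by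
    rw [Complex.sq_norm, normSq_apply, log_re, log_im]
    nlinarith [sq_abs (arg Q), abs_nonneg (arg Q)]
  exact lt_of_pow_lt_pow_left₀ 2 zero_le_two hsq

theorem Convex.intervalIntegral_zero_one_mem {E : Type*} [NormedAddCommGroup E] [NormedSpace ℝ E]
    [CompleteSpace E] {s : Set E} (hs : Convex ℝ s) (hsc : IsClosed s) {f : ℝ → E}
    (hf : ContinuousOn f (Icc 0 1)) (hfs : MapsTo f (Icc 0 1) s) :
    ∫ t in (0 : ℝ)..1, f t ∈ s := by
  have : IsProbabilityMeasure (volume.restrict (Ioc (0 : ℝ) 1)) := ⟨by simp⟩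
  rw [intervalIntegral.integral_of_le zero_le_one]
  exact hs.integral_mem hsc
    (ae_restrict_of_forall_mem measurableSet_Ioc fun t ht => hfs (Ioc_subset_Icc_self ht))
    (hf.integrableOn_Icc.mono_set Ioc_subset_Icc_self)

theorem mapsTo_rpow_mul_unitDisk {b : ℝ} (hb : 0 ≤ b) {z : ℂ} (hz : z ∈ unitDisk) :
    MapsTo (fun t : ℝ => ((t ^ b : ℝ) : ℂ) * z) (Icc 0 1) unitDisk := fun t ht => by
  rw [unitDisk, mem_ball_zero_iff] at hz ⊢
  rw [norm_mul, norm_real, Real.norm_of_nonneg (Real.rpow_nonneg ht.1 b)]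
  exact (mul_le_of_le_one_left (norm_nonneg z) (Real.rpow_le_one ht.1 ht.2 hb)).trans_lt hz

theorem eq_intervalIntegral_of_add_mul_deriv_eq {Q F : ℂ → ℂ}
    (hQ : DifferentiableOn ℂ Q unitDisk) (hF : ContinuousOn F unitDisk) {b : ℝ} (hb : 0 ≤ b)
    (hQF : ∀ w ∈ unitDisk, Q w + b * w * deriv Q w = F w) {z : ℂ} (hz : z ∈ unitDisk) :
    Q z = ∫ t in (0 : ℝ)..1, F ((t ^ b : ℝ) * z) := by
  have hopen : IsOpen unitDisk := Metric.isOpen_ball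
  have hγ : Continuous fun t : ℝ => ((t ^ b : ℝ) : ℂ) * z := by fun_prop (disch := exact hb)
  have hγ_mem := mapsTo_rpow_mul_unitDisk hb hz
  have hderiv : ∀ t ∈ Ioo (0 : ℝ) 1,
      HasDerivAt (fun t : ℝ => (t : ℂ) * Q ((t ^ b : ℝ) * z)) (F ((t ^ b : ℝ) * z)) t := by
    intro t ht
    have hw := hγ_mem (Ioo_subset_Icc_self ht)
    have hQw : HasDerivAt Q (deriv Q _) _ := (hQ.differentiableAt (hopen.mem_nhds hw)).hasDerivAt
    have hpow : HasDerivAt (fun t : ℝ => ((t ^ b : ℝ) : ℂ)) ((b * t ^ (b - 1) : ℝ)) t :=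
      (Real.hasDerivAt_rpow_const (Or.inl ht.1.ne')).ofReal_comp
    refine ((hasDerivAt_id t).ofReal_comp.mul (hQw.comp t (hpow.mul_const z))).congr_deriv ?_
    have hscale : t * (b * t ^ (b - 1)) = b * t ^ b := by
      have ht0 : t ≠ 0 := ht.1.ne'
      rw [Real.rpow_sub_one ht0]; field_simp
    have hscaleC := congrArg ofReal hscale
    rw [← hQF _ hw]
    simp only [Function.comp_apply, id_eq, ofReal_one]
    push_cast at hscaleC ⊢
    linear_combination (z * deriv Q ((t ^ b : ℝ) * z)) * hscaleC
  have hGc : ContinuousOn (fun t : ℝ => (t : ℂ) * Q ((t ^ b : ℝ) * z)) (Icc 0 1) :=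
    continuous_ofReal.continuousOn.mul (hQ.continuousOn.comp hγ.continuousOn hγ_mem)
  have hint : IntervalIntegrable _ volume (0 : ℝ) 1 :=
    ((hF.comp hγ.continuousOn hγ_mem).mono (uIcc_of_le zero_le_one).subset).intervalIntegrable
  rw [intervalIntegral.integral_eq_sub_of_hasDerivAt_of_le zero_le_one hGc hderiv hint]
  simp

theorem mapsTo_of_add_mul_deriv_mapsTo {Q F : ℂ → ℂ} (hQ : DifferentiableOn ℂ Q unitDisk)
    (hF : ContinuousOn F unitDisk) {b : ℝ} (hb : 0 ≤ b)
    (hQF : ∀ w ∈ unitDisk, Q w + b * w * deriv Q w = F w) {s : Set ℂ} (hs : Convex ℝ s)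
    (hsc : IsClosed s) (hFs : MapsTo F unitDisk s) : MapsTo Q unitDisk s := by
  intro z hz
  have hγ_mem := mapsTo_rpow_mul_unitDisk hb hz
  rw [eq_intervalIntegral_of_add_mul_deriv_eq hQ hF hb hQF hz]
  exact hs.intervalIntegral_zero_one_mem hsc (hF.comp (by fun_prop (disch := exact hb)) hγ_mem)
    (hFs.comp hγ_mem)

theorem IsPreconnected.eqOn_of_sq_eq_sq {α 𝕜 : Type*} [TopologicalSpace α] [NormedField 𝕜]
    {U : Set α} (hU : IsPreconnected U) {f g : α → 𝕜} (hf : ContinuousOn f U)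
    (hg : ContinuousOn g U) (hg0 : ∀ x ∈ U, g x ≠ 0) (hsq : ∀ x ∈ U, f x ^ 2 = g x ^ 2)
    {x₀ : α} (hx₀ : x₀ ∈ U) (hfg : f x₀ = g x₀) : EqOn f g U := by
  have hratio : MapsTo (fun x => f x / g x) U {1, -1} := fun x hx => by
    rw [mem_insert_iff, mem_singleton_iff, ← sq_eq_one_iff, div_pow, hsq x hx,
      div_self (pow_ne_zero 2 (hg0 x hx))]
  intro x hx
  have := hU.constant_of_mapsTo (toFinite _).isDiscrete (hf.div hg hg0) hratio hx hx₀
  simp only [Pi.div_apply] at this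
  rwa [hfg, div_self (hg0 x₀ hx₀), div_eq_one_iff_eq (hg0 x hx)] at this

theorem subord_exp_of_sq_mapsTo_expEnvelope {p : ℂ → ℂ} (hp : DifferentiableOn ℂ p unitDisk)
    (hp0 : p 0 = 1) (hsq : MapsTo (fun z => p z ^ 2) unitDisk expEnvelope) :
    Subord p exp := by
  set w : ℂ → ℂ := fun z => log (p z ^ 2) / 2
  have hw : DifferentiableOn ℂ w unitDisk :=
    ((hp.pow 2).clog fun z hz => Or.inl (re_pos_of_mem_expEnvelope (hsq hz))).div_const 2
  have hexp : ∀ z ∈ unitDisk, exp (w z) ^ 2 = p z ^ 2 := fun z hz => by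
    have hne : p z ^ 2 ≠ 0 := fun h => by
      simpa [h] using re_pos_of_mem_expEnvelope (hsq hz)
    have htwice : ((2 : ℕ) : ℂ) * w z = log (p z ^ 2) := by simp only [w]; push_cast; ring
    rw [← exp_nat_mul, htwice, exp_log hne]
  refine ⟨w, hw, by simp [w, hp0], fun z hz => ?_, ?_⟩
  · have := norm_log_lt_two_of_mem_expEnvelope (hsq hz)
    simp only [w, norm_div, RCLike.norm_ofNat]
    linarith
  · exact (convex_ball (0 : ℂ) 1).isPreconnected.eqOn_of_sq_eq_sq hp.continuousOn
      (continuous_exp.comp_continuousOn hw.continuousOn) (fun _ _ => exp_ne_zero _)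
      (fun z hz => (hexp z hz).symm) (Metric.mem_ball_self one_pos) (by simp [w, hp0])

theorem stmt_17 (β : ℝ) (hβ : Real.exp 1 ^ 3 + 1 ≤ β)
    (p : ℂ → ℂ) (hp : DifferentiableOn ℂ p unitDisk) (hp0 : p 0 = 1)
    (hsub : Subord (fun z => (p z) ^ 2 + (β : ℂ) * z * p z * deriv p z)
      Complex.exp) :
    Subord p Complex.exp := by
  obtain ⟨ω, hω, -, hω_lt, hω_eq⟩ := hsub
  have hb : 0 ≤ β / 2 := by linarith [pow_pos (Real.exp_pos 1) 3]
  refine subord_exp_of_sq_mapsTo_expEnvelope hp hp0 <|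
    mapsTo_of_add_mul_deriv_mapsTo (hp.fun_pow 2)
      (continuous_exp.comp_continuousOn hω.continuousOn) hb (fun w hw => ?_)
      convex_expEnvelope isClosed_expEnvelope fun w hw => exp_mem_expEnvelope (hω_lt w hw)
  have hpw : DifferentiableAt ℂ p w := hp.differentiableAt (Metric.isOpen_ball.mem_nhds hw)
  rw [Function.comp_apply, deriv_fun_pow hpw, ← hω_eq w hw]
  push_cast
  ring
end
end
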